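/- arXiv:1805.02521 — 4 statements merged into one kernel-verified Lean document; each statement's English description precedes it below -/
import Mathlib

section
/- One-dimensional Gagliardo–Nirenberg inequality on the grid: for every real p ∈ [2,∞) and every function u ∈ H¹(𝒢) one has ‖u‖_{L^p(𝒢)} ≤ ‖u‖_{L²(𝒢)}^{1/2 + 1/p} · ‖u'‖_{L²(𝒢)}^{1/2 − 1/p}. -/
/- Formalization of NLS ground states on the two-dimensional grid 𝒢
   (the planar metric graph with vertex set ℤ×ℤ and unit edges).

   A function `u` on 𝒢 is encoded by the family `h j` of its restrictions to
   the horizontal lines `H j` and the family `w k` of its restrictions to the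
   vertical lines `V k`, subject to the vertex-compatibility conditions
   `h j k = w k j`.  The (weak) derivative of `u` along each line is carried
   as additional data `hd`, `wd`, tied to `h`, `w` by the fundamental theorem
   of calculus in the membership predicates below. -/

open MeasureTheory Filter Topology
open scoped ENNReal NNReal

noncomputable section

/-- A function on the grid 𝒢, together with candidate derivatives along
horizontal and vertical lines. -/
structure GridFunc where
  /-- restriction to the horizontal line `H j` -/
  h : ℤ → ℝ → ℝ
  /-- restriction to the vertical line `V k` -/
  w : ℤ → ℝ → ℝ
  /-- derivative along the horizontal line `H j` -/
  hd : ℤ → ℝ → ℝ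
  /-- derivative along the vertical line `V k` -/
  wd : ℤ → ℝ → ℝ
  /-- vertex compatibility: the values at the vertex `(k, j)` agree -/
  compat : ∀ j k : ℤ, h j (k : ℝ) = w k (j : ℝ)

/-- `∑_j ∫_ℝ |f j|^p + ∑_k ∫_ℝ |g k|^p`, as an extended nonnegative real:
the `p`-th power of the `L^p(𝒢)` norm of the function encoded by `(f, g)`. -/
def gridLpPow (p : ℝ) (f g : ℤ → ℝ → ℝ) : ℝ≥0∞ :=
  (∑' j : ℤ, ∫⁻ x : ℝ, (‖f j x‖₊ : ℝ≥0∞) ^ p) +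
  (∑' k : ℤ, ∫⁻ y : ℝ, (‖g k y‖₊ : ℝ≥0∞) ^ p)

/-- The `L^p(𝒢)` norm of `u`. -/
def GridFunc.lpNorm (u : GridFunc) (p : ℝ) : ℝ≥0∞ :=
  gridLpPow p u.h u.w ^ (1 / p)

/-- The `L^p(𝒢)` norm of the derivative `u'`. -/
def GridFunc.derivLpNorm (u : GridFunc) (p : ℝ) : ℝ≥0∞ :=
  gridLpPow p u.hd u.wd ^ (1 / p)

/-- The `L^∞(𝒢)` norm of `u`: the sup over all lines of the sup norms. -/
def GridFunc.linfNorm (u : GridFunc) : ℝ≥0∞ :=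
  (⨆ j : ℤ, ⨆ x : ℝ, (‖u.h j x‖₊ : ℝ≥0∞)) ⊔
  (⨆ k : ℤ, ⨆ y : ℝ, (‖u.w k y‖₊ : ℝ≥0∞))

/-- `u ∈ H¹(𝒢)`: every line restriction is continuous and is recovered from
its (locally integrable) derivative by integration, and both `‖u‖₂²` and
`‖u'‖₂²` are finite. -/
def GridFunc.MemH1 (u : GridFunc) : Prop :=
  (∀ j, Continuous (u.h j)) ∧ (∀ k, Continuous (u.w k)) ∧
  (∀ j, LocallyIntegrable (u.hd j)) ∧ (∀ k, LocallyIntegrable (u.wd k)) ∧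
  (∀ j x, (∫ t in (0:ℝ)..x, u.hd j t) = u.h j x - u.h j 0) ∧
  (∀ k y, (∫ t in (0:ℝ)..y, u.wd k t) = u.w k y - u.w k 0) ∧
  gridLpPow 2 u.h u.w < ⊤ ∧ gridLpPow 2 u.hd u.wd < ⊤

/-- `u ∈ W^{1,1}(𝒢)`: every line restriction is continuous and is recovered
from its (integrable) derivative by integration, and both `‖u‖₁` and `‖u'‖₁`
are finite. -/
def GridFunc.MemW11 (u : GridFunc) : Prop :=
  (∀ j, Continuous (u.h j)) ∧ (∀ k, Continuous (u.w k)) ∧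
  (∀ j, Integrable (u.hd j)) ∧ (∀ k, Integrable (u.wd k)) ∧
  (∀ j x, (∫ t in (0:ℝ)..x, u.hd j t) = u.h j x - u.h j 0) ∧
  (∀ k y, (∫ t in (0:ℝ)..y, u.wd k t) = u.w k y - u.w k 0) ∧
  gridLpPow 1 u.h u.w < ⊤ ∧ gridLpPow 1 u.hd u.wd < ⊤

/-- The mass `‖u‖_{L²(𝒢)}²` of `u`, as a real number. -/
def GridFunc.mass (u : GridFunc) : ℝ :=
  (gridLpPow 2 u.h u.w).toReal

/-- The NLS energy `E_p(u) = ½‖u'‖₂² − (1/p)‖u‖_p^p`. -/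
def GridFunc.energy (u : GridFunc) (p : ℝ) : ℝ :=
  (1 / 2) * (gridLpPow 2 u.hd u.wd).toReal
    - (1 / p) * (gridLpPow p u.h u.w).toReal

/-- `u` is not identically zero on 𝒢. -/
def GridFunc.Nonzero (u : GridFunc) : Prop :=
  (∃ j x, u.h j x ≠ 0) ∨ (∃ k y, u.w k y ≠ 0)

/-- The Gagliardo–Nirenberg quotient
`Q_p(u) = ‖u‖_p^p / (‖u‖₂^{p−2} ‖u'‖₂²)`. -/
def GridFunc.gnQuot (u : GridFunc) (p : ℝ) : ℝ :=
  (gridLpPow p u.h u.w).toReal /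
    ((gridLpPow 2 u.h u.w).toReal ^ ((p - 2) / 2) *
      (gridLpPow 2 u.hd u.wd).toReal)

/-- The set of Gagliardo–Nirenberg quotients `Q_p(u)` over nontrivial
`u ∈ H¹(𝒢)`; its supremum is the optimal constant `K_p`. -/
def gnSet (p : ℝ) : Set ℝ :=
  {q | ∃ u : GridFunc, u.MemH1 ∧ u.Nonzero ∧ q = u.gnQuot p}

/-- The critical mass `μ_p = (p/(2K))^{2/(p−2)}` associated with the optimal
Gagliardo–Nirenberg constant `K`. -/
def critMass (p K : ℝ) : ℝ :=
  (p / (2 * K)) ^ (2 / (p - 2))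

/-- The `H¹(𝒢)` inner product `⟨u,v⟩_{L²(𝒢)} + ⟨u',v'⟩_{L²(𝒢)}`. -/
def GridFunc.h1Inner (u v : GridFunc) : ℝ :=
  ((∑' j : ℤ, ∫ x : ℝ, u.h j x * v.h j x) +
    (∑' k : ℤ, ∫ y : ℝ, u.w k y * v.w k y)) +
  ((∑' j : ℤ, ∫ x : ℝ, u.hd j x * v.hd j x) +
    (∑' k : ℤ, ∫ y : ℝ, u.wd k y * v.wd k y))

/-- The set of energies `E_p(u)` of functions `u ∈ H¹_μ(𝒢)`; its infimum is
the ground-state energy level `ℰ_p(μ)`. -/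
def energySet (p μ : ℝ) : Set ℝ :=
  {e | ∃ u : GridFunc, u.MemH1 ∧ u.mass = μ ∧ u.energy p = e}

/-- `u` is a ground state of mass `μ`: it belongs to `H¹_μ(𝒢)` and minimizes
the energy `E_p` there. -/
def IsGroundState (p μ : ℝ) (u : GridFunc) : Prop :=
  u.MemH1 ∧ u.mass = μ ∧
    ∀ v : GridFunc, v.MemH1 → v.mass = μ → u.energy p ≤ v.energy p

end

noncomputable section

namespace GridGN

lemma double_primitive_sq {g : ℝ → ℝ} (hgl : LocallyIntegrable g) {y x : ℝ} (hyx : y ≤ x) :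
    2 * ∫ t in Set.Ioc y x, (∫ s in y..t, g s) * g t = (∫ s in y..x, g s) ^ 2 := by
  have hii : ∀ a b : ℝ, IntervalIntegrable g volume a b := fun a b =>
    (hgl.integrableOn_isCompact isCompact_uIcc).intervalIntegrable
  have hGc : Continuous (fun t => ∫ s in y..t, g s) :=
    intervalIntegral.continuous_primitive hii y
  set μ := volume.restrict (Set.Ioc y x) with hμ
  have hgI : Integrable g μ :=
    ((hgl.integrableOn_isCompact isCompact_Icc).mono_set Set.Ioc_subset_Icc_self :
      IntegrableOn g (Set.Ioc y x) volume)
  set k : ℝ → ℝ → ℝ := fun s t => if s ≤ t then g s * g t else 0 with hk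
  have hkint : Integrable (Function.uncurry k) (μ.prod μ) := by
    have e : Function.uncurry k
        = Set.indicator {p : ℝ × ℝ | p.1 ≤ p.2} (fun p => g p.1 * g p.2) := by
      funext p
      by_cases h : p.1 ≤ p.2 <;>
        simp [Function.uncurry, hk, Set.indicator_apply, h, Set.mem_setOf_eq]
    rw [e]
    exact (hgI.mul_prod hgI).indicator (measurableSet_le measurable_fst measurable_snd)
  have hT1 : ∀ t ∈ Set.Ioc y x, (∫ s, k s t ∂μ) = (∫ s in y..t, g s) * g t := by
    intro t ht
    have e1 : (fun s => k s t) = Set.indicator (Set.Iic t) (fun s => g s * g t) := by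
      funext s
      by_cases h : s ≤ t <;> simp [hk, Set.indicator_apply, Set.mem_Iic, h]
    have e2 : Set.Iic t ∩ Set.Ioc y x = Set.Ioc y t := by
      ext s
      simp only [Set.mem_inter_iff, Set.mem_Iic, Set.mem_Ioc]
      constructor
      · rintro ⟨h1, h2, h3⟩; exact ⟨h2, h1⟩
      · rintro ⟨h1, h2⟩; exact ⟨h2, h1, h2.trans ht.2⟩
    rw [e1, integral_indicator measurableSet_Iic, hμ,
      Measure.restrict_restrict measurableSet_Iic, e2, integral_mul_const,
      ← intervalIntegral.integral_of_le ht.1.le]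
  have hT2 : ∀ s ∈ Set.Ioc y x,
      (∫ t, k s t ∂μ) = g s * ((∫ u in y..x, g u) - ∫ u in y..s, g u) := by
    intro s hs
    have e1 : (fun t => k s t) = Set.indicator (Set.Ici s) (fun t => g s * g t) := by
      funext t
      by_cases h : s ≤ t <;> simp [hk, Set.indicator_apply, Set.mem_Ici, h]
    have e2 : Set.Ici s ∩ Set.Ioc y x = Set.Icc s x := by
      ext t
      simp only [Set.mem_inter_iff, Set.mem_Ici, Set.mem_Ioc, Set.mem_Icc]
      constructor
      · rintro ⟨h1, h2, h3⟩; exact ⟨h1, h3⟩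
      · rintro ⟨h1, h2⟩; exact ⟨h1, lt_of_lt_of_le hs.1 h1, h2⟩
    rw [e1, integral_indicator measurableSet_Ici, hμ,
      Measure.restrict_restrict measurableSet_Ici, e2,
      MeasureTheory.integral_Icc_eq_integral_Ioc,
      ← intervalIntegral.integral_of_le hs.2, intervalIntegral.integral_const_mul]
    congr 1
    exact (intervalIntegral.integral_interval_sub_left (hii y x) (hii y s)).symm
  have hswap : (∫ s, (∫ t, k s t ∂μ) ∂μ) = ∫ t, (∫ s, k s t ∂μ) ∂μ :=
    MeasureTheory.integral_integral_swap hkint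
  have hleft : (∫ t, (∫ s, k s t ∂μ) ∂μ) = ∫ t in Set.Ioc y x, (∫ s in y..t, g s) * g t := by
    rw [hμ]
    exact setIntegral_congr_fun measurableSet_Ioc fun t ht => hT1 t ht
  have hGmul : Integrable (fun s => g s * (∫ u in y..s, g u)) μ := by
    obtain ⟨C, hC⟩ := (isCompact_Icc (a := y) (b := x)).exists_bound_of_continuousOn
      hGc.continuousOn
    refine Integrable.mono' (hgI.norm.const_mul C)
      (hgI.aestronglyMeasurable.mul hGc.aestronglyMeasurable.restrict) ?_
    rw [hμ]
    filter_upwards [ae_restrict_mem measurableSet_Ioc] with s hs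
    have h1 : ‖(∫ u in y..s, g u)‖ ≤ C := hC s (Set.Ioc_subset_Icc_self hs)
    calc ‖g s * ∫ u in y..s, g u‖ = ‖g s‖ * ‖(∫ u in y..s, g u)‖ := norm_mul _ _
      _ ≤ ‖g s‖ * C := by
          exact mul_le_mul_of_nonneg_left h1 (norm_nonneg _)
      _ = C * ‖g s‖ := mul_comm _ _
  have hright : (∫ s, (∫ t, k s t ∂μ) ∂μ)
      = (∫ u in y..x, g u) ^ 2 - ∫ s in Set.Ioc y x, (∫ u in y..s, g u) * g s := by
    have step1 : (∫ s, (∫ t, k s t ∂μ) ∂μ)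
        = ∫ s, (g s * ((∫ u in y..x, g u) - ∫ u in y..s, g u)) ∂μ := by
      rw [hμ]
      exact setIntegral_congr_fun measurableSet_Ioc fun s hs => hT2 s hs
    rw [step1]
    have e3 : (fun s => g s * ((∫ u in y..x, g u) - ∫ u in y..s, g u))
        = fun s => g s * (∫ u in y..x, g u) - g s * (∫ u in y..s, g u) := by
      funext s; ring
    rw [e3, integral_sub (hgI.mul_const _) hGmul, integral_mul_const]
    have e4 : (∫ s, g s ∂μ) = ∫ u in y..x, g u := by
      rw [hμ, ← intervalIntegral.integral_of_le hyx]
    rw [e4]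
    have e5 : (∫ s, (g s * ∫ u in y..s, g u) ∂μ)
        = ∫ s in Set.Ioc y x, (∫ u in y..s, g u) * g s := by
      rw [hμ]
      exact setIntegral_congr_fun measurableSet_Ioc fun s _ => mul_comm _ _
    rw [e5]; ring
  have key := hswap
  rw [hleft, hright] at key
  linarith [key]


lemma sq_sub_sq {f g : ℝ → ℝ} (hgl : LocallyIntegrable g)
    (ftc : ∀ x, (∫ t in (0:ℝ)..x, g t) = f x - f 0) {y x : ℝ} (hyx : y ≤ x) :
    f x ^ 2 - f y ^ 2 = ∫ t in y..x, 2 * (f t * g t) := by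
  have hii : ∀ a b : ℝ, IntervalIntegrable g volume a b := fun a b =>
    (hgl.integrableOn_isCompact isCompact_uIcc).intervalIntegrable
  have hdiff : ∀ a b : ℝ, (∫ t in a..b, g t) = f b - f a := by
    intro a b
    rw [← intervalIntegral.integral_interval_sub_left (hii 0 b) (hii 0 a), ftc b, ftc a]
    ring
  have hGc : Continuous (fun t => ∫ s in y..t, g s) :=
    intervalIntegral.continuous_primitive hii y
  have h2 : IntervalIntegrable (fun t => (∫ s in y..t, g s) * g t) volume y x :=
    (hii y x).continuousOn_mul hGc.continuousOn
  have key : ∀ t : ℝ, 2 * (f t * g t)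
      = 2 * f y * g t + 2 * ((∫ s in y..t, g s) * g t) := by
    intro t
    rw [hdiff y t]
    ring
  rw [intervalIntegral.integral_congr (fun t _ => key t),
    intervalIntegral.integral_add ((hii y x).const_mul _) (h2.const_mul 2),
    intervalIntegral.integral_const_mul, intervalIntegral.integral_const_mul,
    hdiff y x, intervalIntegral.integral_of_le hyx,
    double_primitive_sq hgl hyx, hdiff y x]
  ring

lemma exists_sq_lt_left {f : ℝ → ℝ} (hf2 : Integrable (fun t => f t ^ 2))
    {ε : ℝ} (hε : 0 < ε) (c : ℝ) : ∃ y < c, f y ^ 2 < ε := by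
  by_contra hcon
  push_neg at hcon
  have hint : IntegrableOn (fun _ : ℝ => ε) (Set.Iio c) := by
    refine Integrable.mono' hf2.integrableOn aestronglyMeasurable_const ?_
    filter_upwards [ae_restrict_mem measurableSet_Iio] with t ht
    rw [Real.norm_eq_abs, abs_of_pos hε]
    exact hcon t ht
  rcases integrable_const_iff.mp hint with h | h
  · exact hε.ne' h
  · have h := h.measure_univ_lt_top
    rw [Measure.restrict_apply_univ, Real.volume_Iio] at h
    exact (lt_irrefl _ h)

lemma exists_sq_lt_right {f : ℝ → ℝ} (hf2 : Integrable (fun t => f t ^ 2))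
    {ε : ℝ} (hε : 0 < ε) (c : ℝ) : ∃ z > c, f z ^ 2 < ε := by
  by_contra hcon
  push_neg at hcon
  have hint : IntegrableOn (fun _ : ℝ => ε) (Set.Ioi c) := by
    refine Integrable.mono' hf2.integrableOn aestronglyMeasurable_const ?_
    filter_upwards [ae_restrict_mem measurableSet_Ioi] with t ht
    rw [Real.norm_eq_abs, abs_of_pos hε]
    exact hcon t ht
  rcases integrable_const_iff.mp hint with h | h
  · exact hε.ne' h
  · have h := h.measure_univ_lt_top
    rw [Measure.restrict_apply_univ, Real.volume_Ioi] at h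
    exact (lt_irrefl _ h)

lemma integral_abs_mul_le {f g : ℝ → ℝ} (hf2 : Integrable (fun t => f t ^ 2))
    (hg2 : Integrable (fun t => g t ^ 2)) (hfg : Integrable (fun t => f t * g t)) :
    ∫ t, |f t * g t| ≤ Real.sqrt ((∫ t, f t ^ 2) * (∫ t, g t ^ 2)) := by
  set F := ∫ t, f t ^ 2 with hFdef
  set Q := ∫ t, g t ^ 2 with hQdef
  have hF0 : 0 ≤ F := integral_nonneg fun t => sq_nonneg _
  have hQ0 : 0 ≤ Q := integral_nonneg fun t => sq_nonneg _
  have habs : ∀ a : ℝ, 0 < a → ∫ t, |f t * g t| ≤ (a * F + a⁻¹ * Q) / 2 := by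
    intro a ha
    have ha' : 0 < a⁻¹ := inv_pos.mpr ha
    have hpt : ∀ t, |f t * g t| ≤ (a * f t ^ 2 + a⁻¹ * g t ^ 2) / 2 := by
      intro t
      have h1 := sq_nonneg (a * |f t| - |g t|)
      have h2 : a * a⁻¹ = 1 := mul_inv_cancel₀ ha.ne'
      have h3 : |f t * g t| = |f t| * |g t| := abs_mul _ _
      have h4 : f t ^ 2 = |f t| ^ 2 := (sq_abs _).symm
      have h5 : g t ^ 2 = |g t| ^ 2 := (sq_abs _).symm
      rw [h3, h4, h5]
      nlinarith [abs_nonneg (f t), abs_nonneg (g t), mul_pos ha ha']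
    calc ∫ t, |f t * g t|
        ≤ ∫ t, (a * f t ^ 2 + a⁻¹ * g t ^ 2) / 2 := by
          exact integral_mono hfg.abs
            (((hf2.const_mul a).add (hg2.const_mul a⁻¹)).div_const 2) hpt
      _ = (a * F + a⁻¹ * Q) / 2 := by
          rw [integral_div, integral_add (hf2.const_mul a) (hg2.const_mul a⁻¹),
            integral_const_mul, integral_const_mul]
  by_cases hF : F = 0
  · have hf0 : (fun t => f t ^ 2) =ᵐ[volume] 0 :=
      (integral_eq_zero_iff_of_nonneg (fun t => sq_nonneg _) hf2).mp hF
    have h0 : (fun t => |f t * g t|) =ᵐ[volume] 0 := by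
      filter_upwards [hf0] with t ht
      have hft : f t = 0 := by
        have : f t ^ 2 = 0 := ht
        nlinarith [sq_nonneg (f t)]
      simp [hft]
    rw [integral_congr_ae h0]
    simp only [Pi.zero_apply, integral_zero]
    exact Real.sqrt_nonneg _
  by_cases hQ : Q = 0
  · have hg0 : (fun t => g t ^ 2) =ᵐ[volume] 0 :=
      (integral_eq_zero_iff_of_nonneg (fun t => sq_nonneg _) hg2).mp hQ
    have h0 : (fun t => |f t * g t|) =ᵐ[volume] 0 := by
      filter_upwards [hg0] with t ht
      have hgt : g t = 0 := by
        have : g t ^ 2 = 0 := ht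
        nlinarith [sq_nonneg (g t)]
      simp [hgt]
    rw [integral_congr_ae h0]
    simp only [Pi.zero_apply, integral_zero]
    exact Real.sqrt_nonneg _
  · have hFpos : 0 < F := lt_of_le_of_ne hF0 (Ne.symm hF)
    have hQpos : 0 < Q := lt_of_le_of_ne hQ0 (Ne.symm hQ)
    have ha : 0 < Real.sqrt (Q / F) := Real.sqrt_pos.mpr (div_pos hQpos hFpos)
    have hbound := habs _ ha
    have e1 : Real.sqrt (Q / F) * F + (Real.sqrt (Q / F))⁻¹ * Q
        = 2 * Real.sqrt (F * Q) := by
      have h1 : Real.sqrt F ^ 2 = F := Real.sq_sqrt hF0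
      have h2 : Real.sqrt Q ^ 2 = Q := Real.sq_sqrt hQ0
      have hsF : 0 < Real.sqrt F := Real.sqrt_pos.mpr hFpos
      have hsQ : 0 < Real.sqrt Q := Real.sqrt_pos.mpr hQpos
      have h3 : Real.sqrt (Q / F) = Real.sqrt Q / Real.sqrt F := Real.sqrt_div hQ0 F
      have h4 : Real.sqrt (F * Q) = Real.sqrt F * Real.sqrt Q := Real.sqrt_mul hF0 Q
      rw [h3, h4, ← h1, ← h2]
      field_simp
      simp only [Real.sqrt_sq hsQ.le, Real.sqrt_sq hsF.le]; ring
    rw [e1] at hbound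
    linarith

lemma pointwise_sq_le {f g : ℝ → ℝ} (hf : Continuous f) (hgl : LocallyIntegrable g)
    (ftc : ∀ x, (∫ t in (0:ℝ)..x, g t) = f x - f 0)
    (hf2 : Integrable (fun t => f t ^ 2)) (hg2 : Integrable (fun t => g t ^ 2)) (x : ℝ) :
    f x ^ 2 ≤ Real.sqrt ((∫ t, f t ^ 2) * (∫ t, g t ^ 2)) := by
  have hfg : Integrable (fun t => f t * g t) := by
    refine Integrable.mono' ((hf2.add hg2).const_mul (1 / 2))
      (hf.aestronglyMeasurable.mul hgl.aestronglyMeasurable) (ae_of_all _ fun t => ?_)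
    rw [Real.norm_eq_abs, abs_mul]
    simp only [Pi.add_apply]
    nlinarith [sq_nonneg (|f t| - |g t|), sq_abs (f t), sq_abs (g t),
      abs_nonneg (f t), abs_nonneg (g t)]
  have hJ : Integrable (fun t => |2 * (f t * g t)|) := (hfg.const_mul 2).abs
  refine le_of_forall_pos_le_add fun ε hε => ?_
  obtain ⟨y, hy, hy2⟩ := exists_sq_lt_left hf2 hε x
  obtain ⟨z, hz, hz2⟩ := exists_sq_lt_right hf2 hε x
  have i1 := sq_sub_sq hgl ftc hy.le
  have i2 := sq_sub_sq hgl ftc hz.le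
  have habs1 : (∫ t in y..x, 2 * (f t * g t)) ≤ ∫ t in y..x, |2 * (f t * g t)| :=
    (le_abs_self _).trans (intervalIntegral.abs_integral_le_integral_abs hy.le)
  have habs2 : -(∫ t in x..z, 2 * (f t * g t)) ≤ ∫ t in x..z, |2 * (f t * g t)| :=
    (neg_le_abs _).trans (intervalIntegral.abs_integral_le_integral_abs hz.le)
  have hadd : (∫ t in y..x, |2 * (f t * g t)|) + (∫ t in x..z, |2 * (f t * g t)|)
      = ∫ t in y..z, |2 * (f t * g t)| :=
    intervalIntegral.integral_add_adjacent_intervals hJ.intervalIntegrable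
      hJ.intervalIntegrable
  have hle : (∫ t in y..z, |2 * (f t * g t)|) ≤ ∫ t, |2 * (f t * g t)| := by
    rw [intervalIntegral.integral_of_le (hy.le.trans hz.le)]
    exact setIntegral_le_integral hJ (ae_of_all _ fun t => abs_nonneg _)
  have h2 : (∫ t, |2 * (f t * g t)|) = 2 * ∫ t, |f t * g t| := by
    have e : (fun t => |2 * (f t * g t)|) = fun t => 2 * |f t * g t| := by
      funext t
      rw [abs_mul, abs_two]
    rw [e, integral_const_mul]
  have hCS := integral_abs_mul_le hf2 hg2 hfg
  linarith


lemma nnorm_rpow_two_eq (a : ℝ) : (‖a‖₊ : ℝ≥0∞) ^ (2 : ℝ) = ENNReal.ofReal (a ^ 2) := by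
  rw [← enorm_eq_nnnorm, Real.enorm_eq_ofReal_abs, ENNReal.ofReal_rpow_of_nonneg (abs_nonneg a) (by norm_num)]
  rw [Real.rpow_two, sq_abs]

lemma lintegral_two_eq (f : ℝ → ℝ) :
    (∫⁻ t, (‖f t‖₊ : ℝ≥0∞) ^ (2 : ℝ)) = ∫⁻ t, ENNReal.ofReal (f t ^ 2) :=
  lintegral_congr fun t => nnorm_rpow_two_eq (f t)

lemma integrable_sq_of {f : ℝ → ℝ} (hm : AEStronglyMeasurable f volume)
    (hfin : (∫⁻ t, (‖f t‖₊ : ℝ≥0∞) ^ (2 : ℝ)) ≠ ⊤) :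
    Integrable (fun t => f t ^ 2) := by
  constructor
  · have e : (fun t => f t ^ 2) = fun t => f t * f t := funext fun t => sq (f t)
    rw [e]
    exact hm.mul hm
  · show (∫⁻ t, (‖f t ^ 2‖₊ : ℝ≥0∞)) < ⊤
    have e : (∫⁻ t, (‖f t ^ 2‖₊ : ℝ≥0∞)) = ∫⁻ t, (‖f t‖₊ : ℝ≥0∞) ^ (2 : ℝ) := by
      rw [lintegral_two_eq]
      exact lintegral_congr fun t => Real.enorm_eq_ofReal (sq_nonneg _)
    rw [e]
    exact lt_top_iff_ne_top.mpr hfin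

lemma integral_sq_eq {f : ℝ → ℝ} (hm : AEStronglyMeasurable f volume) :
    (∫ t, f t ^ 2) = (∫⁻ t, (‖f t‖₊ : ℝ≥0∞) ^ (2 : ℝ)).toReal := by
  have hm2 : AEStronglyMeasurable (fun t => f t ^ 2) volume := by
    have e : (fun t => f t ^ 2) = fun t => f t * f t := funext fun t => sq (f t)
    rw [e]
    exact hm.mul hm
  rw [integral_eq_lintegral_of_nonneg_ae (ae_of_all _ fun t => sq_nonneg (f t)) hm2,
    lintegral_two_eq]

lemma line_bound {f g : ℝ → ℝ} (hf : Continuous f) (hgl : LocallyIntegrable g)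
    (ftc : ∀ x, (∫ t in (0:ℝ)..x, g t) = f x - f 0)
    (hF : (∫⁻ t, (‖f t‖₊ : ℝ≥0∞) ^ (2 : ℝ)) ≠ ⊤)
    (hD : (∫⁻ t, (‖g t‖₊ : ℝ≥0∞) ^ (2 : ℝ)) ≠ ⊤) (x : ℝ) :
    (‖f x‖₊ : ℝ≥0∞)
      ≤ ((∫⁻ t, (‖f t‖₊ : ℝ≥0∞) ^ (2 : ℝ)) * (∫⁻ t, (‖g t‖₊ : ℝ≥0∞) ^ (2 : ℝ)))
        ^ ((4 : ℝ)⁻¹) := by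
  set F := ∫⁻ t, (‖f t‖₊ : ℝ≥0∞) ^ (2 : ℝ) with hFdef
  set D := ∫⁻ t, (‖g t‖₊ : ℝ≥0∞) ^ (2 : ℝ) with hDdef
  have hf2 : Integrable (fun t => f t ^ 2) := integrable_sq_of hf.aestronglyMeasurable hF
  have hg2 : Integrable (fun t => g t ^ 2) := integrable_sq_of hgl.aestronglyMeasurable hD
  have hint1 : (∫ t, f t ^ 2) = F.toReal := by
    rw [hFdef]
    exact integral_sq_eq hf.aestronglyMeasurable
  have hint2 : (∫ t, g t ^ 2) = D.toReal := by
    rw [hDdef]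
    exact integral_sq_eq hgl.aestronglyMeasurable
  have key := pointwise_sq_le hf hgl ftc hf2 hg2 x
  rw [hint1, hint2] at key
  have h4 : (‖f x‖₊ : ℝ≥0∞) ^ (4 : ℝ) ≤ F * D := by
    have e : (‖f x‖₊ : ℝ≥0∞) ^ (4 : ℝ) = ENNReal.ofReal (f x ^ 4) := by
      rw [← enorm_eq_nnnorm, Real.enorm_eq_ofReal_abs, ENNReal.ofReal_rpow_of_nonneg (abs_nonneg _)
        (by norm_num)]
      congr 1
      rw [show (4 : ℝ) = ((4 : ℕ) : ℝ) by norm_num, Real.rpow_natCast, ← abs_pow]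
      exact abs_of_nonneg (by positivity)
    rw [e]
    calc ENNReal.ofReal (f x ^ 4) ≤ ENNReal.ofReal (F.toReal * D.toReal) := by
          apply ENNReal.ofReal_le_ofReal
          have h' : f x ^ 4 = (f x ^ 2) ^ 2 := by ring
          rw [h']
          calc (f x ^ 2) ^ 2 ≤ Real.sqrt (F.toReal * D.toReal) ^ 2 :=
                pow_le_pow_left₀ (sq_nonneg _) key 2
            _ = F.toReal * D.toReal :=
                Real.sq_sqrt (mul_nonneg ENNReal.toReal_nonneg ENNReal.toReal_nonneg)
      _ = F * D := by
          rw [ENNReal.ofReal_mul ENNReal.toReal_nonneg, ENNReal.ofReal_toReal hF,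
            ENNReal.ofReal_toReal hD]
  calc (‖f x‖₊ : ℝ≥0∞) = ((‖f x‖₊ : ℝ≥0∞) ^ (4 : ℝ)) ^ ((4 : ℝ)⁻¹) := by
        rw [← ENNReal.rpow_mul]
        norm_num
    _ ≤ (F * D) ^ ((4 : ℝ)⁻¹) := ENNReal.rpow_le_rpow h4 (by norm_num)

end GridGN

/-- **One-dimensional Gagliardo–Nirenberg inequality on the grid**:
for every `p ∈ [2,∞)` and every `u ∈ H¹(𝒢)`,
`‖u‖_{L^p(𝒢)} ≤ ‖u‖_{L²(𝒢)}^{1/2+1/p} ‖u'‖_{L²(𝒢)}^{1/2−1/p}`. -/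
theorem grid_gagliardo_nirenberg_one_dim (p : ℝ) (hp : 2 ≤ p)
    (u : GridFunc) (hu : u.MemH1) :
    u.lpNorm p ≤ u.lpNorm 2 ^ (1 / 2 + 1 / p) * u.derivLpNorm 2 ^ (1 / 2 - 1 / p) := by
  obtain ⟨hch, hcw, hlh, hlw, ftch, ftcw, hA, hB⟩ := hu
  have hp0 : (0:ℝ) < p := lt_of_lt_of_le two_pos hp
  have hp2 : (0:ℝ) ≤ p - 2 := by linarith
  set A := gridLpPow 2 u.h u.w with hAdef
  set B := gridLpPow 2 u.hd u.wd with hBdef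
  set C := (A * B) ^ ((4:ℝ)⁻¹) with hCdef
  have hhF : ∀ j : ℤ, (∫⁻ t, (‖u.h j t‖₊ : ℝ≥0∞) ^ (2:ℝ)) ≤ A := by
    intro j
    rw [hAdef]
    simp only [gridLpPow]
    exact le_trans (ENNReal.le_tsum j) le_self_add
  have hwF : ∀ k : ℤ, (∫⁻ t, (‖u.w k t‖₊ : ℝ≥0∞) ^ (2:ℝ)) ≤ A := by
    intro k
    rw [hAdef]
    simp only [gridLpPow]
    exact le_trans (ENNReal.le_tsum k) le_add_self
  have hhD : ∀ j : ℤ, (∫⁻ t, (‖u.hd j t‖₊ : ℝ≥0∞) ^ (2:ℝ)) ≤ B := by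
    intro j
    rw [hBdef]
    simp only [gridLpPow]
    exact le_trans (ENNReal.le_tsum j) le_self_add
  have hwD : ∀ k : ℤ, (∫⁻ t, (‖u.wd k t‖₊ : ℝ≥0∞) ^ (2:ℝ)) ≤ B := by
    intro k
    rw [hBdef]
    simp only [gridLpPow]
    exact le_trans (ENNReal.le_tsum k) le_add_self
  have hsup_h : ∀ (j : ℤ) (x : ℝ), (‖u.h j x‖₊ : ℝ≥0∞) ≤ C := by
    intro j x
    refine le_trans (GridGN.line_bound (hch j) (hlh j) (ftch j)
      (lt_of_le_of_lt (hhF j) hA).ne (lt_of_le_of_lt (hhD j) hB).ne x) ?_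
    rw [hCdef]
    exact ENNReal.rpow_le_rpow (mul_le_mul' (hhF j) (hhD j)) (by norm_num)
  have hsup_w : ∀ (k : ℤ) (x : ℝ), (‖u.w k x‖₊ : ℝ≥0∞) ≤ C := by
    intro k x
    refine le_trans (GridGN.line_bound (hcw k) (hlw k) (ftcw k)
      (lt_of_le_of_lt (hwF k) hA).ne (lt_of_le_of_lt (hwD k) hB).ne x) ?_
    rw [hCdef]
    exact ENNReal.rpow_le_rpow (mul_le_mul' (hwF k) (hwD k)) (by norm_num)
  have hCne : C ^ (p - 2) ≠ ⊤ :=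
    ENNReal.rpow_ne_top_of_nonneg hp2
      (ENNReal.rpow_ne_top_of_nonneg (by norm_num) (ENNReal.mul_ne_top hA.ne hB.ne))
  have hpt : ∀ a : ℝ≥0∞, a ≤ C → a ^ p ≤ C ^ (p - 2) * a ^ (2:ℝ) := by
    intro a ha
    have e : a ^ p = a ^ (p - 2) * a ^ (2:ℝ) := by
      rw [← ENNReal.rpow_add_of_nonneg (p - 2) 2 hp2 (by norm_num)]
      norm_num
    rw [e]
    exact mul_le_mul_left (ENNReal.rpow_le_rpow ha hp2) _
  have hline : ∀ f : ℝ → ℝ, (∀ x, (‖f x‖₊ : ℝ≥0∞) ≤ C) →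
      (∫⁻ t, (‖f t‖₊ : ℝ≥0∞) ^ p) ≤ C ^ (p - 2) * ∫⁻ t, (‖f t‖₊ : ℝ≥0∞) ^ (2:ℝ) := by
    intro f hb
    rw [← lintegral_const_mul' _ _ hCne]
    exact lintegral_mono fun t => hpt _ (hb t)
  have hmain : gridLpPow p u.h u.w ≤ C ^ (p - 2) * A := by
    rw [hAdef]
    simp only [gridLpPow]
    rw [mul_add]
    exact add_le_add
      (le_trans (ENNReal.tsum_le_tsum fun j => hline _ (hsup_h j))
        (le_of_eq ENNReal.tsum_mul_left))
      (le_trans (ENNReal.tsum_le_tsum fun k => hline _ (hsup_w k))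
        (le_of_eq ENNReal.tsum_mul_left))
  have hexp1 : (0:ℝ) ≤ 1 / p := by positivity
  have hfin : (C ^ (p - 2) * A) ^ (1 / p)
      = A ^ (1 / 2 * (1 / 2 + 1 / p)) * B ^ (1 / 2 * (1 / 2 - 1 / p)) := by
    have e1 : C ^ (p - 2) * A = A ^ ((p + 2) / 4) * B ^ ((p - 2) / 4) := by
      rw [hCdef, ← ENNReal.rpow_mul,
        ENNReal.mul_rpow_of_nonneg _ _ (mul_nonneg (by norm_num) hp2)]
      calc A ^ ((4:ℝ)⁻¹ * (p - 2)) * B ^ ((4:ℝ)⁻¹ * (p - 2)) * A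
          = A ^ ((4:ℝ)⁻¹ * (p - 2)) * A ^ (1:ℝ) * B ^ ((4:ℝ)⁻¹ * (p - 2)) := by
            rw [ENNReal.rpow_one]
            ring
        _ = A ^ ((4:ℝ)⁻¹ * (p - 2) + 1) * B ^ ((4:ℝ)⁻¹ * (p - 2)) := by
            rw [ENNReal.rpow_add_of_nonneg _ _ (mul_nonneg (by norm_num) hp2) zero_le_one]
        _ = A ^ ((p + 2) / 4) * B ^ ((p - 2) / 4) := by
            rw [show (4:ℝ)⁻¹ * (p - 2) + 1 = (p + 2) / 4 by ring,
              show (4:ℝ)⁻¹ * (p - 2) = (p - 2) / 4 by ring]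
    rw [e1, ENNReal.mul_rpow_of_nonneg _ _ hexp1, ← ENNReal.rpow_mul, ← ENNReal.rpow_mul]
    have hpne : p ≠ 0 := ne_of_gt hp0
    rw [show (p + 2) / 4 * (1 / p) = 1 / 2 * (1 / 2 + 1 / p) by field_simp; ring_nf,
      show (p - 2) / 4 * (1 / p) = 1 / 2 * (1 / 2 - 1 / p) by field_simp; ring_nf]
  calc u.lpNorm p = gridLpPow p u.h u.w ^ (1 / p) := rfl
    _ ≤ (C ^ (p - 2) * A) ^ (1 / p) := ENNReal.rpow_le_rpow hmain hexp1
    _ = A ^ (1 / 2 * (1 / 2 + 1 / p)) * B ^ (1 / 2 * (1 / 2 - 1 / p)) := hfin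
    _ = u.lpNorm 2 ^ (1 / 2 + 1 / p) * u.derivLpNorm 2 ^ (1 / 2 - 1 / p) := by
        rw [GridFunc.lpNorm, GridFunc.derivLpNorm, ← hAdef, ← hBdef,
          ← ENNReal.rpow_mul, ← ENNReal.rpow_mul]

end
end

section
/- Two-dimensional Sobolev inequality on the grid: for every function u ∈ W^{1,1}(𝒢), u belongs to L²(𝒢) and ‖u‖_{L²(𝒢)} ≤ (1/2) ‖u'‖_{L¹(𝒢)}. -/
/- Formalization of NLS ground states on the two-dimensional grid 𝒢
   (the planar metric graph with vertex set ℤ×ℤ and unit edges).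

   A function `u` on 𝒢 is encoded by the family `h j` of its restrictions to
   the horizontal lines `H j` and the family `w k` of its restrictions to the
   vertical lines `V k`, subject to the vertex-compatibility conditions
   `h j k = w k j`.  The (weak) derivative of `u` along each line is carried
   as additional data `hd`, `wd`, tied to `h`, `w` by the fundamental theorem
   of calculus in the membership predicates below. -/

open MeasureTheory Filter Topology
open scoped ENNReal NNReal

section
open MeasureTheory Filter Topology Set
open scoped ENNReal NNReal

namespace GridSobolevAux

lemma ofReal_half : ENNReal.ofReal (1/2 : ℝ) = 2⁻¹ := by
  rw [one_div, ENNReal.ofReal_inv_of_pos (by norm_num), ENNReal.ofReal_ofNat]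

lemma ofReal_quarter : ENNReal.ofReal (1/4 : ℝ) = 4⁻¹ := by
  rw [one_div, ENNReal.ofReal_inv_of_pos (by norm_num), ENNReal.ofReal_ofNat]

lemma quarter_add : (4:ℝ≥0∞)⁻¹ + 4⁻¹ = 2⁻¹ := by
  rw [← ofReal_quarter, ← ofReal_half, ← ENNReal.ofReal_add (by norm_num) (by norm_num)]
  norm_num

lemma half_mul : (2:ℝ≥0∞)⁻¹ * 2⁻¹ = 4⁻¹ := by
  rw [← ofReal_half, ← ofReal_quarter, ← ENNReal.ofReal_mul (by norm_num)]
  norm_num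

lemma limAtTop_eq_zero {f : ℝ → ℝ} {L : ℝ} (hf : Integrable f)
    (h : Tendsto f atTop (𝓝 L)) : L = 0 := by
  by_contra hL
  have hpos : (0:ℝ) < |L| / 2 := by positivity
  have hev : ∀ᶠ x in atTop, |L| / 2 ≤ |f x| := by
    filter_upwards [Metric.tendsto_nhds.1 h (|L|/2) hpos] with x hx
    have h1 : |f x - L| < |L| / 2 := by simpa [Real.dist_eq] using hx
    have h2 : |L| - |f x| ≤ |L - f x| := abs_sub_abs_le_abs_sub L (f x)
    rw [abs_sub_comm] at h2
    linarith
  obtain ⟨N, hN⟩ := hev.exists_forall_of_atTop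
  have key : ∫⁻ x in Ici N, ENNReal.ofReal (|L|/2) ≤ ∫⁻ x in Ici N, ‖f x‖₊ := by
    refine setLIntegral_mono' measurableSet_Ici fun x hx => ?_
    rw [← enorm_eq_nnnorm, ← ofReal_norm, Real.norm_eq_abs]
    exact ENNReal.ofReal_le_ofReal (hN x hx)
  rw [setLIntegral_const] at key
  have hv : volume (Ici N) = ⊤ := Real.volume_Ici
  have hne : ENNReal.ofReal (|L|/2) ≠ 0 := by positivity
  rw [hv, ENNReal.mul_top hne] at key
  have : (∫⁻ x, (‖f x‖₊ : ℝ≥0∞)) = ⊤ :=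
    top_le_iff.1 (key.trans (setLIntegral_le_lintegral _ _))
  exact absurd hf.2 (by simp [HasFiniteIntegral, enorm_eq_nnnorm, this])

lemma limAtBot_eq_zero {f : ℝ → ℝ} {L : ℝ} (hf : Integrable f)
    (h : Tendsto f atBot (𝓝 L)) : L = 0 := by
  by_contra hL
  have hpos : (0:ℝ) < |L| / 2 := by positivity
  have hev : ∀ᶠ x in atBot, |L| / 2 ≤ |f x| := by
    filter_upwards [Metric.tendsto_nhds.1 h (|L|/2) hpos] with x hx
    have h1 : |f x - L| < |L| / 2 := by simpa [Real.dist_eq] using hx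
    have h2 : |L| - |f x| ≤ |L - f x| := abs_sub_abs_le_abs_sub L (f x)
    rw [abs_sub_comm] at h2
    linarith
  obtain ⟨N, hN⟩ := hev.exists_forall_of_atBot
  have key : ∫⁻ x in Iic N, ENNReal.ofReal (|L|/2) ≤ ∫⁻ x in Iic N, ‖f x‖₊ := by
    refine setLIntegral_mono' measurableSet_Iic fun x hx => ?_
    rw [← enorm_eq_nnnorm, ← ofReal_norm, Real.norm_eq_abs]
    exact ENNReal.ofReal_le_ofReal (hN x hx)
  rw [setLIntegral_const] at key
  have hv : volume (Iic N) = ⊤ := Real.volume_Iic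
  have hne : ENNReal.ofReal (|L|/2) ≠ 0 := by positivity
  rw [hv, ENNReal.mul_top hne] at key
  have : (∫⁻ x, (‖f x‖₊ : ℝ≥0∞)) = ⊤ :=
    top_le_iff.1 (key.trans (setLIntegral_le_lintegral _ _))
  exact absurd hf.2 (by simp [HasFiniteIntegral, enorm_eq_nnnorm, this])

lemma sup_bound {f f' : ℝ → ℝ} (hf : Integrable f) (hf' : Integrable f')
    (ftc : ∀ x, (∫ t in (0:ℝ)..x, f' t) = f x - f 0) (x : ℝ) :
    |f x| ≤ (1/2) * ∫ t, |f' t| := by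
  have htop : Tendsto f atTop (𝓝 (f 0 + ∫ t in Ioi (0:ℝ), f' t)) := by
    have h1 := intervalIntegral_tendsto_integral_Ioi 0 hf'.integrableOn tendsto_id
    have h2 := tendsto_const_nhds.add h1 (f := fun _ : ℝ => f 0)
    refine h2.congr fun y => ?_
    simp only [id_eq]
    rw [ftc]; ring
  have hbot : Tendsto f atBot (𝓝 (f 0 - ∫ t in Iic (0:ℝ), f' t)) := by
    have h1 := intervalIntegral_tendsto_integral_Iic 0 hf'.integrableOn tendsto_id
    have h2 := tendsto_const_nhds.sub h1 (f := fun _ : ℝ => f 0)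
    refine h2.congr fun y => ?_
    simp only [id_eq]
    rw [intervalIntegral.integral_symm, ftc]; ring
  have hLtop := limAtTop_eq_zero hf htop
  have hLbot := limAtBot_eq_zero hf hbot
  have hIic : f x = ∫ t in Iic x, f' t := by
    have h1 : Tendsto (fun y => f x - f y) atBot (𝓝 (f x - 0)) := by
      have : Tendsto f atBot (𝓝 (0:ℝ)) := by rwa [hLbot] at hbot
      exact tendsto_const_nhds.sub this
    have h2 : Tendsto (fun y => ∫ t in y..x, f' t) atBot (𝓝 (∫ t in Iic x, f' t)) :=
      intervalIntegral_tendsto_integral_Iic x hf'.integrableOn tendsto_id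
    have h3 : (fun y => f x - f y) = fun y => ∫ t in y..x, f' t := by
      funext y
      rw [← intervalIntegral.integral_interval_sub_left hf'.intervalIntegrable
        hf'.intervalIntegrable, ftc, ftc]
      ring
    rw [h3] at h1
    simpa using tendsto_nhds_unique h1 h2
  have htotal : (∫ t, f' t) = 0 := by
    have := intervalIntegral.integral_Iic_add_Ioi (hf'.integrableOn (s := Iic (0:ℝ)))
      (hf'.integrableOn (s := Ioi (0:ℝ)))
    have e1 : (∫ t in Iic (0:ℝ), f' t) = f 0 := by linarith
    have e2 : (∫ t in Ioi (0:ℝ), f' t) = -f 0 := by linarith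
    rw [← this, e1, e2]; ring
  have hIoi : (∫ t in Ioi x, f' t) = - f x := by
    have := intervalIntegral.integral_Iic_add_Ioi (b := x) hf'.integrableOn hf'.integrableOn
    rw [htotal, ← hIic] at this
    linarith
  have habs1 : |∫ t in Iic x, f' t| ≤ ∫ t in Iic x, |f' t| := by
    simpa [Real.norm_eq_abs] using
      norm_integral_le_integral_norm (μ := volume.restrict (Iic x)) f'
  have habs2 : |∫ t in Ioi x, f' t| ≤ ∫ t in Ioi x, |f' t| := by
    simpa [Real.norm_eq_abs] using
      norm_integral_le_integral_norm (μ := volume.restrict (Ioi x)) f'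
  have hsum : (∫ t in Iic x, |f' t|) + (∫ t in Ioi x, |f' t|) = ∫ t, |f' t| :=
    intervalIntegral.integral_Iic_add_Ioi hf'.abs.integrableOn hf'.abs.integrableOn
  have : 2 * |f x| ≤ ∫ t, |f' t| := by
    calc 2 * |f x| = |f x| + |f x| := by ring
      _ = |∫ t in Iic x, f' t| + |∫ t in Ioi x, f' t| := by rw [← hIic, hIoi, abs_neg]
      _ ≤ (∫ t in Iic x, |f' t|) + (∫ t in Ioi x, |f' t|) := add_le_add habs1 habs2
      _ = ∫ t, |f' t| := hsum
  linarith

lemma segment_bound {f f' : ℝ → ℝ} (hf' : Integrable f')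
    (ftc : ∀ x, (∫ t in (0:ℝ)..x, f' t) = f x - f 0) {a b x : ℝ}
    (hax : a ≤ x) (hxb : x ≤ b) :
    |f x| ≤ (1/2) * |f a| + (1/2) * |f b| + (1/2) * ∫ t in Ioc a b, |f' t| := by
  have key : ∀ c d : ℝ, f d - f c = ∫ t in c..d, f' t := fun c d => by
    rw [← intervalIntegral.integral_interval_sub_left hf'.intervalIntegrable
      hf'.intervalIntegrable, ftc, ftc]; ring
  have h1 : |∫ t in a..x, f' t| ≤ ∫ t in a..x, |f' t| :=
    intervalIntegral.abs_integral_le_integral_abs hax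
  have h2 : |∫ t in x..b, f' t| ≤ ∫ t in x..b, |f' t| :=
    intervalIntegral.abs_integral_le_integral_abs hxb
  have hadd : (∫ t in a..x, |f' t|) + (∫ t in x..b, |f' t|) = ∫ t in a..b, |f' t| :=
    intervalIntegral.integral_add_adjacent_intervals hf'.abs.intervalIntegrable
      hf'.abs.intervalIntegrable
  have heq : (∫ t in a..b, |f' t|) = ∫ t in Ioc a b, |f' t| :=
    intervalIntegral.integral_of_le (hax.trans hxb)
  have e1 := key a x
  have e2 := key x b
  have habs : |2 * f x| ≤ |f a| + |f b| + (∫ t in a..x, |f' t|) + (∫ t in x..b, |f' t|) := by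
    have he : 2 * f x = f a + f b + (∫ t in a..x, f' t) - (∫ t in x..b, f' t) := by
      linarith
    rw [he]
    calc |f a + f b + (∫ t in a..x, f' t) - ∫ t in x..b, f' t|
        ≤ |f a| + |f b| + |∫ t in a..x, f' t| + |∫ t in x..b, f' t| := by
          have := abs_add_le (f a) (f b)
          have := abs_add_le (f a + f b) (∫ t in a..x, f' t)
          have := abs_sub (f a + f b + ∫ t in a..x, f' t) (∫ t in x..b, f' t)
          linarith
      _ ≤ _ := by linarith
  rw [abs_mul, abs_two] at habs
  have := abs_nonneg (f x)
  linarith [habs, hadd, heq]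

lemma lintegral_eq_tsum_Ioc (g : ℝ → ℝ≥0∞) :
    (∫⁻ x : ℝ, g x) = ∑' k : ℤ, ∫⁻ x in Ioc (k:ℝ) ((k:ℝ)+1), g x := by
  rw [← setLIntegral_univ, ← iUnion_Ioc_intCast (α := ℝ),
    lintegral_iUnion (fun _ => measurableSet_Ioc) (pairwise_disjoint_Ioc_intCast ℝ)]

lemma line_estimate (h w hd wd : ℤ → ℝ → ℝ)
    (compat : ∀ j k : ℤ, h j (k:ℝ) = w k (j:ℝ))
    (hhi : ∀ j, Integrable (h j)) (hwi : ∀ k, Integrable (w k))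
    (hhd : ∀ j, Integrable (hd j)) (hwd : ∀ k, Integrable (wd k))
    (ftch : ∀ j x, (∫ t in (0:ℝ)..x, hd j t) = h j x - h j 0)
    (ftcw : ∀ k y, (∫ t in (0:ℝ)..y, wd k t) = w k y - w k 0) :
    (∑' j : ℤ, ∫⁻ x : ℝ, (‖h j x‖₊ : ℝ≥0∞) ^ (2:ℝ)) ≤
      4⁻¹ * (∑' j : ℤ, ∫⁻ x : ℝ, (‖hd j x‖₊ : ℝ≥0∞)) *
        ((∑' j : ℤ, ∫⁻ x : ℝ, (‖hd j x‖₊ : ℝ≥0∞)) +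
         (∑' k : ℤ, ∫⁻ y : ℝ, (‖wd k y‖₊ : ℝ≥0∞))) := by
  set EA : ℤ → ℝ≥0∞ := fun j => ∫⁻ x : ℝ, (‖hd j x‖₊ : ℝ≥0∞) with hEA
  set EB : ℤ → ℝ≥0∞ := fun k => ∫⁻ y : ℝ, (‖wd k y‖₊ : ℝ≥0∞) with hEB
  set A := ∑' j, EA j with hA
  set B := ∑' k, EB k with hB
  have hofA : ∀ j, ENNReal.ofReal (∫ t, |hd j t|) = EA j := fun j => by
    rw [hEA]
    simpa [Real.norm_eq_abs, enorm_eq_nnnorm] using ofReal_integral_norm_eq_lintegral_enorm (hhd j)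
  have hofB : ∀ k, ENNReal.ofReal (∫ t, |wd k t|) = EB k := fun k => by
    rw [hEB]
    simpa [Real.norm_eq_abs, enorm_eq_nnnorm] using ofReal_integral_norm_eq_lintegral_enorm (hwd k)
  have hofc : ∀ (j k : ℤ), ENNReal.ofReal (∫ t in Ioc (k:ℝ) ((k:ℝ)+1), |hd j t|)
      = ∫⁻ t in Ioc (k:ℝ) ((k:ℝ)+1), (‖hd j t‖₊ : ℝ≥0∞) := fun j k => by
    simpa [Real.norm_eq_abs, enorm_eq_nnnorm] using
      ofReal_integral_norm_eq_lintegral_enorm ((hhd j).integrableOn)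
  have main : ∀ j : ℤ, (∫⁻ x : ℝ, (‖h j x‖₊ : ℝ≥0∞) ^ (2:ℝ)) ≤
      2⁻¹ * EA j * (4⁻¹ * B + 4⁻¹ * B + 2⁻¹ * EA j) := by
    intro j
    rw [lintegral_eq_tsum_Ioc]
    have step : ∀ k : ℤ, (∫⁻ x in Ioc (k:ℝ) ((k:ℝ)+1), (‖h j x‖₊ : ℝ≥0∞) ^ (2:ℝ)) ≤
        2⁻¹ * EA j * (4⁻¹ * EB k + 4⁻¹ * EB (k+1)
          + 2⁻¹ * ∫⁻ t in Ioc (k:ℝ) ((k:ℝ)+1), (‖hd j t‖₊ : ℝ≥0∞)) := by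
      intro k
      have pw : ∀ x ∈ Ioc (k:ℝ) ((k:ℝ)+1), (‖h j x‖₊ : ℝ≥0∞) ^ (2:ℝ) ≤
          2⁻¹ * EA j * (4⁻¹ * EB k + 4⁻¹ * EB (k+1)
            + 2⁻¹ * ∫⁻ t in Ioc (k:ℝ) ((k:ℝ)+1), (‖hd j t‖₊ : ℝ≥0∞)) := by
        intro x hx
        have rA := sup_bound (hhi j) (hhd j) (ftch j) x
        have rseg := segment_bound (hhd j) (ftch j) hx.1.le hx.2
        have rB1 : |h j (k:ℝ)| ≤ (1/2) * ∫ t, |wd k t| := by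
          rw [compat j k]; exact sup_bound (hwi k) (hwd k) (ftcw k) _
        have rB2 : |h j ((k:ℝ)+1)| ≤ (1/2) * ∫ t, |wd (k+1) t| := by
          have hc : ((k:ℝ)+1) = ((k+1:ℤ):ℝ) := by push_cast; ring
          rw [hc, compat j (k+1)]
          exact sup_bound (hwi (k+1)) (hwd (k+1)) (ftcw (k+1)) _
        have hb1 : (0:ℝ) ≤ ∫ t, |wd k t| := integral_nonneg fun t => abs_nonneg _
        have hb2 : (0:ℝ) ≤ ∫ t, |wd (k+1) t| := integral_nonneg fun t => abs_nonneg _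
        have hcn : (0:ℝ) ≤ ∫ t in Ioc (k:ℝ) ((k:ℝ)+1), |hd j t| :=
          integral_nonneg fun t => abs_nonneg _
        have han : (0:ℝ) ≤ ∫ t, |hd j t| := integral_nonneg fun t => abs_nonneg _
        have hR : |h j x| ≤ (1/4) * (∫ t, |wd k t|) + (1/4) * (∫ t, |wd (k+1) t|)
            + (1/2) * ∫ t in Ioc (k:ℝ) ((k:ℝ)+1), |hd j t| := by linarith
        have hprod : |h j x| * |h j x| ≤ ((1/2) * ∫ t, |hd j t|) *
            ((1/4) * (∫ t, |wd k t|) + (1/4) * (∫ t, |wd (k+1) t|)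
              + (1/2) * ∫ t in Ioc (k:ℝ) ((k:ℝ)+1), |hd j t|) :=
          mul_le_mul rA hR (abs_nonneg _) (by positivity)
        have e1 : (‖h j x‖₊ : ℝ≥0∞) ^ (2:ℝ) = ENNReal.ofReal (|h j x| * |h j x|) := by
          rw [show (2:ℝ) = ((2:ℕ):ℝ) by norm_num, ENNReal.rpow_natCast, pow_two,
            ENNReal.ofReal_mul (abs_nonneg _), ← Real.norm_eq_abs,
            ofReal_norm, enorm_eq_nnnorm]
        rw [e1]
        calc ENNReal.ofReal (|h j x| * |h j x|)
            ≤ ENNReal.ofReal (((1/2) * ∫ t, |hd j t|) *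
              ((1/4) * (∫ t, |wd k t|) + (1/4) * (∫ t, |wd (k+1) t|)
                + (1/2) * ∫ t in Ioc (k:ℝ) ((k:ℝ)+1), |hd j t|)) :=
              ENNReal.ofReal_le_ofReal hprod
          _ = 2⁻¹ * EA j * (4⁻¹ * EB k + 4⁻¹ * EB (k+1)
              + 2⁻¹ * ∫⁻ t in Ioc (k:ℝ) ((k:ℝ)+1), (‖hd j t‖₊ : ℝ≥0∞)) := by
              rw [ENNReal.ofReal_mul (by positivity),
                ENNReal.ofReal_add (by positivity) (by positivity),
                ENNReal.ofReal_add (by positivity) (by positivity),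
                ENNReal.ofReal_mul (by norm_num : (0:ℝ) ≤ 1/2),
                ENNReal.ofReal_mul (by norm_num : (0:ℝ) ≤ 1/4),
                ENNReal.ofReal_mul (by norm_num : (0:ℝ) ≤ 1/4),
                ENNReal.ofReal_mul (by norm_num : (0:ℝ) ≤ 1/2),
                ofReal_half, ofReal_quarter, hofA, hofB, hofB, hofc]
      calc (∫⁻ x in Ioc (k:ℝ) ((k:ℝ)+1), (‖h j x‖₊ : ℝ≥0∞) ^ (2:ℝ))
          ≤ (2⁻¹ * EA j * (4⁻¹ * EB k + 4⁻¹ * EB (k+1)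
              + 2⁻¹ * ∫⁻ t in Ioc (k:ℝ) ((k:ℝ)+1), (‖hd j t‖₊ : ℝ≥0∞)))
            * volume (Ioc (k:ℝ) ((k:ℝ)+1)) := by
            rw [← setLIntegral_const]
            exact setLIntegral_mono' measurableSet_Ioc pw
        _ = _ := by
            rw [Real.volume_Ioc]
            norm_num
    calc (∑' k : ℤ, ∫⁻ x in Ioc (k:ℝ) ((k:ℝ)+1), (‖h j x‖₊ : ℝ≥0∞) ^ (2:ℝ))
        ≤ ∑' k : ℤ, 2⁻¹ * EA j * (4⁻¹ * EB k + 4⁻¹ * EB (k+1)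
            + 2⁻¹ * ∫⁻ t in Ioc (k:ℝ) ((k:ℝ)+1), (‖hd j t‖₊ : ℝ≥0∞)) :=
          ENNReal.tsum_le_tsum step
      _ = 2⁻¹ * EA j * (4⁻¹ * B + 4⁻¹ * B + 2⁻¹ * EA j) := by
          have hshift : (∑' k : ℤ, EB (k+1)) = ∑' k : ℤ, EB k :=
            (Equiv.addRight (1:ℤ)).tsum_eq EB
          have hEc : (∑' k : ℤ, ∫⁻ t in Ioc (k:ℝ) ((k:ℝ)+1), (‖hd j t‖₊ : ℝ≥0∞)) = EA j :=
            (lintegral_eq_tsum_Ioc _).symm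
          rw [ENNReal.tsum_mul_left, ENNReal.tsum_add, ENNReal.tsum_add,
            ENNReal.tsum_mul_left, ENNReal.tsum_mul_left, ENNReal.tsum_mul_left,
            hshift, hEc]
  calc (∑' j : ℤ, ∫⁻ x : ℝ, (‖h j x‖₊ : ℝ≥0∞) ^ (2:ℝ))
      ≤ ∑' j : ℤ, 2⁻¹ * EA j * (4⁻¹ * B + 4⁻¹ * B + 2⁻¹ * A) := by
        refine ENNReal.tsum_le_tsum fun j => (main j).trans ?_
        gcongr
        exact ENNReal.le_tsum j
    _ = 2⁻¹ * A * (4⁻¹ * B + 4⁻¹ * B + 2⁻¹ * A) := by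
        rw [ENNReal.tsum_mul_right, ENNReal.tsum_mul_left]
    _ = 4⁻¹ * A * (A + B) := by
        have e1 : 4⁻¹ * B + 4⁻¹ * B + 2⁻¹ * A = 2⁻¹ * (A + B) := by
          rw [← add_mul, quarter_add, mul_add, add_comm (2⁻¹ * B)]
        rw [e1, show 2⁻¹ * A * (2⁻¹ * (A + B)) = (2⁻¹ * 2⁻¹) * A * (A + B) by ring,
          half_mul]

end GridSobolevAux

end

noncomputable section

/-- **Two-dimensional Sobolev inequality on the grid**: every
`u ∈ W^{1,1}(𝒢)` belongs to `L²(𝒢)` and `‖u‖_{L²(𝒢)} ≤ ½ ‖u'‖_{L¹(𝒢)}`. -/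
theorem grid_sobolev_two_dim (u : GridFunc) (hu : u.MemW11) :
    gridLpPow 2 u.h u.w < ⊤ ∧ u.lpNorm 2 ≤ (1 / 2) * u.derivLpNorm 1 := by
  obtain ⟨hch, hcw, hdh, hdw, ftch, ftcw, hfin, hfin'⟩ := hu
  have hfin2 := hfin
  simp only [gridLpPow, ENNReal.rpow_one] at hfin2
  have hH : (∑' j : ℤ, ∫⁻ x : ℝ, (‖u.h j x‖₊ : ℝ≥0∞)) < ⊤ :=
    lt_of_le_of_lt le_self_add hfin2
  have hW : (∑' k : ℤ, ∫⁻ y : ℝ, (‖u.w k y‖₊ : ℝ≥0∞)) < ⊤ :=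
    lt_of_le_of_lt le_add_self hfin2
  have hih : ∀ j, Integrable (u.h j) := fun j =>
    ⟨(hch j).aestronglyMeasurable, lt_of_le_of_lt (ENNReal.le_tsum j) hH⟩
  have hiw : ∀ k, Integrable (u.w k) := fun k =>
    ⟨(hcw k).aestronglyMeasurable, lt_of_le_of_lt (ENNReal.le_tsum k) hW⟩
  set A := ∑' j : ℤ, ∫⁻ x : ℝ, (‖u.hd j x‖₊ : ℝ≥0∞) with hA
  set B := ∑' k : ℤ, ∫⁻ y : ℝ, (‖u.wd k y‖₊ : ℝ≥0∞) with hB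
  have horiz := GridSobolevAux.line_estimate u.h u.w u.hd u.wd u.compat
    hih hiw hdh hdw ftch ftcw
  have vert := GridSobolevAux.line_estimate u.w u.h u.wd u.hd
    (fun k j => (u.compat j k).symm) hiw hih hdw hdh ftcw ftch
  have hmain : gridLpPow 2 u.h u.w ≤ 4⁻¹ * (A + B) * (A + B) := by
    have hsum : gridLpPow 2 u.h u.w ≤ 4⁻¹ * A * (A + B) + 4⁻¹ * B * (B + A) :=
      add_le_add horiz vert
    refine hsum.trans_eq ?_
    rw [add_comm B A]
    ring
  have hD : gridLpPow 1 u.hd u.wd = A + B := by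
    simp only [gridLpPow, ENNReal.rpow_one]
    rfl
  have hDlt : A + B < ⊤ := hD ▸ hfin'
  constructor
  · refine lt_of_le_of_lt hmain ?_
    exact ENNReal.mul_lt_top
      (ENNReal.mul_lt_top (by simp : (4:ℝ≥0∞)⁻¹ < ⊤) hDlt) hDlt
  · have hstep : u.lpNorm 2 ≤ (4⁻¹ * (A + B) * (A + B)) ^ (1/2 : ℝ) :=
      ENNReal.rpow_le_rpow hmain (by norm_num)
    have heq : (4⁻¹ * (A + B) * (A + B)) ^ (1/2 : ℝ) = 2⁻¹ * (A + B) := by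
      have h1 : 4⁻¹ * (A + B) * (A + B) = (2⁻¹ * (A + B)) ^ (2:ℕ) := by
        rw [pow_two, show (2⁻¹ * (A + B)) * (2⁻¹ * (A + B))
          = (2⁻¹ * 2⁻¹) * (A + B) * (A + B) by ring, GridSobolevAux.half_mul]
      rw [h1, ← ENNReal.rpow_natCast, ← ENNReal.rpow_mul]
      norm_num
    have hderiv : u.derivLpNorm 1 = A + B := by
      unfold GridFunc.derivLpNorm
      rw [hD]
      norm_num
    rw [hderiv, one_div, ← heq]
    exact hstep

end
end

section
/- Iteration step for the two-dimensional Gagliardo–Nirenberg inequality: for every real p ∈ [2,∞) and every u ∈ H¹(𝒢) one has ‖u‖_{L^{p+2}(𝒢)}^{1 + p/2} ≤ ((p+2)/4) · ‖u‖_{L^p(𝒢)}^{p/2} · ‖u'‖_{L²(𝒢)}. -/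
/- Formalization of NLS ground states on the two-dimensional grid 𝒢
   (the planar metric graph with vertex set ℤ×ℤ and unit edges).

   A function `u` on 𝒢 is encoded by the family `h j` of its restrictions to
   the horizontal lines `H j` and the family `w k` of its restrictions to the
   vertical lines `V k`, subject to the vertex-compatibility conditions
   `h j k = w k j`.  The (weak) derivative of `u` along each line is carried
   as additional data `hd`, `wd`, tied to `h`, `w` by the fundamental theorem
   of calculus in the membership predicates below. -/

open MeasureTheory Filter Topology
open scoped ENNReal NNReal

namespace GridGNAux
open MeasureTheory Filter Topology Set
open scoped ENNReal NNReal

lemma absRpowEq (q : ℝ) (s : ℝ) : ((s ^ 2 : ℝ)) ^ (q / 2) = |s| ^ q := by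
  rw [← sq_abs s, ← Real.rpow_natCast |s| 2, ← Real.rpow_mul (abs_nonneg s)]
  congr 1; ring

lemma absRpowDeriv {q : ℝ} (hq : 2 ≤ q) (t : ℝ) :
    HasDerivAt (fun s : ℝ => |s| ^ q) (2 * t * (q / 2) * (t ^ 2) ^ (q / 2 - 1)) t := by
  have h1 : HasDerivAt (fun s : ℝ => s ^ (2 : ℕ)) ((2 : ℕ) * t ^ (2 - 1)) t := hasDerivAt_pow 2 t
  have h3 := h1.rpow_const (p := q / 2) (Or.inr (by linarith))
  have he : (fun s : ℝ => ((s ^ 2 : ℝ)) ^ (q / 2)) = fun s : ℝ => |s| ^ q := by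
    funext s; exact absRpowEq q s
  rw [he] at h3
  simpa using h3

lemma absRpowDerivBound {q : ℝ} (hq : 2 ≤ q) {t M : ℝ} (hM : |t| ≤ M) :
    |2 * t * (q / 2) * (t ^ 2) ^ (q / 2 - 1)| ≤ q * M ^ (q - 1) := by
  have h0 : (0:ℝ) ≤ M := (abs_nonneg t).trans hM
  have ht2 : (t ^ 2 : ℝ) ^ (q / 2 - 1) = |t| ^ (q - 2) := by
    rw [← sq_abs t, ← Real.rpow_natCast |t| 2, ← Real.rpow_mul (abs_nonneg t)]
    congr 1; ring
  have hr2 : (0:ℝ) ≤ |t| ^ (q - 2) := Real.rpow_nonneg (abs_nonneg t) _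
  have habs : |2 * t * (q / 2) * (t ^ 2) ^ (q / 2 - 1)| = q * |t| ^ (q - 2) * |t| := by
    rw [abs_mul, abs_mul, ht2, abs_of_nonneg hr2, abs_mul, abs_of_nonneg (by linarith : (0:ℝ) ≤ q / 2)]
    norm_num; ring
  rw [habs]
  have h3 : |t| ^ (q - 2) * |t| ≤ M ^ (q - 2) * M :=
    mul_le_mul (Real.rpow_le_rpow (abs_nonneg t) hM (by linarith)) hM (abs_nonneg t)
      (Real.rpow_nonneg h0 _)
  have h4 : M ^ (q - 2) * M = M ^ (q - 1) := by
    nth_rewrite 2 [← Real.rpow_one M]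
    rw [← Real.rpow_add_of_nonneg h0 (by linarith) zero_le_one]
    congr 1; ring
  calc q * |t| ^ (q - 2) * |t| = q * (|t| ^ (q-2) * |t|) := by ring
    _ ≤ q * (M ^ (q-1)) := by rw [← h4]; exact mul_le_mul_of_nonneg_left h3 (by linarith)
    _ = q * M ^ (q - 1) := rfl

lemma absRpowLipAux {q : ℝ} (hq : 2 ≤ q) {a b : ℝ} (hab : a ≤ b) :
    |(|b| ^ q) - |a| ^ q| ≤ q * max |a| |b| ^ (q - 1) * |b - a| := by
  have key := norm_image_sub_le_of_norm_deriv_le_segment'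
    (f := fun s : ℝ => |s| ^ q) (f' := fun t => 2 * t * (q / 2) * (t ^ 2) ^ (q / 2 - 1))
    (a := a) (b := b) (C := q * max |a| |b| ^ (q - 1))
    (fun x _ => (absRpowDeriv hq x).hasDerivWithinAt)
    (fun x hx => by
      have hxm : |x| ≤ max |a| |b| := abs_le_max_abs_abs hx.1 hx.2.le
      rw [Real.norm_eq_abs]
      exact absRpowDerivBound hq hxm)
    b (right_mem_Icc.2 hab)
  have h5 : |b - a| = b - a := abs_of_nonneg (by linarith)
  rw [h5]
  simpa using key

lemma absRpowLip {q : ℝ} (hq : 2 ≤ q) (a b : ℝ) :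
    |(|b| ^ q) - |a| ^ q| ≤ q * max |a| |b| ^ (q - 1) * |b - a| := by
  rcases le_total a b with hab | hab
  · exact absRpowLipAux hq hab
  · have := absRpowLipAux hq hab
    rw [abs_sub_comm ((|b|:ℝ) ^ q), max_comm, abs_sub_comm b a]
    exact this

section Core
variable {f g : ℝ → ℝ} (hf : Continuous f) (hg : LocallyIntegrable g)
  (hftc : ∀ a b : ℝ, f b - f a = ∫ t in a..b, g t)

include hf hg hftc in
lemma core_eps {q : ℝ} (hq : 2 ≤ q) {ε : ℝ} (hε : 0 < ε) {y x : ℝ} (hyx : y ≤ x) :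
    |(|f x| ^ q) - |f y| ^ q| ≤ q * ∫ t in Ioc y x, (|f t| + ε) ^ (q - 1) * |g t| := by
  set w : ℝ → ℝ := fun t => (|f t| + ε) ^ (q - 1) * |g t| with hw
  have hwcont : Continuous fun t : ℝ => (|f t| + ε) ^ (q - 1) :=
    Continuous.rpow_const ((continuous_abs.comp hf).add continuous_const)
      (fun t => Or.inl (by positivity))
  have hw_int : ∀ u v : ℝ, IntegrableOn w (Icc u v) := fun u v =>
    IntegrableOn.continuousOn_mul hwcont.continuousOn
      ((hg.integrableOn_isCompact isCompact_Icc).abs) isCompact_Icc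
  have hw_intIoc : ∀ u v : ℝ, IntegrableOn w (Ioc u v) := fun u v =>
    (hw_int u v).mono_set Ioc_subset_Icc_self
  have hw0 : ∀ t, 0 ≤ w t := fun t =>
    mul_nonneg (Real.rpow_nonneg (by positivity) _) (abs_nonneg _)
  set F : ℝ → ℝ := fun s => ∫ t in Ioc y s, w t with hF
  have hFc : ContinuousOn F (Icc y x) := intervalIntegral.continuousOn_primitive (hw_int y x)
  set G : ℝ → ℝ := fun s => q * F s - |(|f s| ^ q) - |f y| ^ q| with hG
  have hfq : Continuous fun s : ℝ => |f s| ^ q :=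
    Continuous.rpow_const (continuous_abs.comp hf) (fun t => Or.inr (by linarith))
  have hGc : ContinuousOn G (Icc y x) :=
    (continuousOn_const.mul hFc).sub
      (((hfq.sub continuous_const).abs).continuousOn)
  -- goal reduction
  suffices hGx : 0 ≤ G x by
    have : F x = ∫ t in Ioc y x, w t := rfl
    simp only [hG] at hGx
    linarith [hGx]
  by_contra hcon
  push_neg at hcon
  set E : Set ℝ := {s : ℝ | s ∈ Icc y x ∧ G s < 0} with hE
  have hxE : x ∈ E := ⟨⟨hyx, le_rfl⟩, hcon⟩
  have hEne : E.Nonempty := ⟨x, hxE⟩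
  have hEbd : BddBelow E := ⟨y, fun s hs => hs.1.1⟩
  set s₀ := sInf E with hs₀
  have hs₀E : ∀ e ∈ E, s₀ ≤ e := fun e he => csInf_le hEbd he
  have hys₀ : y ≤ s₀ := le_csInf hEne fun e he => he.1.1
  have hs₀x : s₀ ≤ x := hs₀E x hxE
  have hs₀Icc : s₀ ∈ Icc y x := ⟨hys₀, hs₀x⟩
  have hGpos : ∀ s ∈ Ico y s₀, 0 ≤ G s := by
    intro s hs
    by_contra hneg
    push_neg at hneg
    exact absurd (hs₀E s ⟨⟨hs.1, hs.2.le.trans hs₀x⟩, hneg⟩) (not_le.2 hs.2)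
  have hGy : G y = 0 := by
    simp only [hG, hF, Ioc_self, Measure.restrict_empty, integral_zero_measure, sub_self,
      abs_zero, mul_zero, sub_zero]
  have hGs₀ : 0 ≤ G s₀ := by
    rcases eq_or_lt_of_le hys₀ with h | h
    · rw [← h]; rw [hGy]
    · have hcl : s₀ ∈ closure (Ico y s₀) := by
        rw [closure_Ico (ne_of_lt h)]; exact ⟨hys₀, le_rfl⟩
      have hne : (𝓝[Ico y s₀] s₀).NeBot := mem_closure_iff_nhdsWithin_neBot.1 hcl
      have hsub : Ico y s₀ ⊆ Icc y x := fun t ht => ⟨ht.1, ht.2.le.trans hs₀x⟩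
      have ht : Tendsto G (𝓝[Ico y s₀] s₀) (𝓝 (G s₀)) :=
        (hGc.continuousWithinAt hs₀Icc).mono_left (nhdsWithin_mono s₀ hsub)
      exact ge_of_tendsto ht (eventually_nhdsWithin_of_forall hGpos)
  -- continuity delta
  obtain ⟨δ, hδpos, hδ⟩ := Metric.continuousAt_iff.1 (hf.continuousAt (x := s₀)) (ε / 2)
    (by positivity)
  obtain ⟨e, heE, he⟩ := exists_lt_of_csInf_lt hEne (by linarith : sInf E < s₀ + δ)
  have hs₀e : s₀ ≤ e := hs₀E e heE
  obtain ⟨⟨hye, hex⟩, hGe⟩ := heE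
  set M := max |f s₀| |f e| with hM
  have hM0 : (0:ℝ) ≤ M := (abs_nonneg (f s₀)).trans (le_max_left _ _)
  have hfs₀e : |f e - f s₀| < ε / 2 := by
    have : dist e s₀ < δ := by rw [Real.dist_eq]; rw [abs_of_nonneg (by linarith)]; linarith
    simpa [Real.dist_eq] using hδ this
  have hMle : ∀ t ∈ Ioc s₀ e, M ≤ |f t| + ε := by
    intro t ht
    have h1 : dist t s₀ < δ := by
      rw [Real.dist_eq, abs_of_nonneg (by linarith [ht.1.le] : (0:ℝ) ≤ t - s₀)]
      linarith [ht.2]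
    have h2 : |f t - f s₀| < ε / 2 := by simpa [Real.dist_eq] using hδ h1
    have hb1 : |f s₀| ≤ |f t| + ε := by
      have := abs_sub_abs_le_abs_sub (f s₀) (f t)
      have : |f s₀| - |f t| ≤ |f s₀ - f t| := this
      rw [abs_sub_comm] at this
      linarith
    have hb2 : |f e| ≤ |f t| + ε := by
      have h3 : |f e - f t| ≤ |f e - f s₀| + |f s₀ - f t| := abs_sub_le _ _ _
      have h4 : |f e| - |f t| ≤ |f e - f t| := abs_sub_abs_le_abs_sub _ _
      rw [abs_sub_comm (f s₀)] at h3
      linarith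
    exact max_le hb1 hb2
  have hfe : |f e - f s₀| ≤ ∫ t in Ioc s₀ e, |g t| := by
    rw [hftc s₀ e]
    calc |∫ t in s₀..e, g t| ≤ ∫ t in s₀..e, |g t| :=
          intervalIntegral.abs_integral_le_integral_abs hs₀e
      _ = ∫ t in Ioc s₀ e, |g t| := intervalIntegral.integral_of_le hs₀e
  have key1 : |(|f e| ^ q) - |f s₀| ^ q| ≤ q * ∫ t in Ioc s₀ e, M ^ (q - 1) * |g t| := by
    have h1 := absRpowLip hq (f s₀) (f e)
    have h2 : q * M ^ (q - 1) * |f e - f s₀| ≤ q * M ^ (q - 1) * ∫ t in Ioc s₀ e, |g t| :=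
      mul_le_mul_of_nonneg_left hfe (by positivity)
    have h3 : ∫ t in Ioc s₀ e, M ^ (q - 1) * |g t| = M ^ (q - 1) * ∫ t in Ioc s₀ e, |g t| :=
      integral_const_mul _ _
    rw [h3]
    calc |(|f e| ^ q) - |f s₀| ^ q| ≤ q * M ^ (q - 1) * |f e - f s₀| := h1
      _ ≤ q * M ^ (q - 1) * ∫ t in Ioc s₀ e, |g t| := h2
      _ = q * (M ^ (q - 1) * ∫ t in Ioc s₀ e, |g t|) := by ring
  have key2 : ∫ t in Ioc s₀ e, M ^ (q - 1) * |g t| ≤ ∫ t in Ioc s₀ e, w t := by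
    have hint0 : IntegrableOn (fun t => M ^ (q - 1) * |g t|) (Icc s₀ e) :=
      (hg.integrableOn_isCompact isCompact_Icc).abs.const_mul _
    have hint1 : IntegrableOn (fun t => M ^ (q - 1) * |g t|) (Ioc s₀ e) :=
      hint0.mono_set Ioc_subset_Icc_self
    exact setIntegral_mono_on hint1 (hw_intIoc s₀ e) measurableSet_Ioc
      (fun t ht => mul_le_mul_of_nonneg_right
        (Real.rpow_le_rpow hM0 (hMle t ht) (by linarith)) (abs_nonneg _))
  have hadd : F s₀ + ∫ t in Ioc s₀ e, w t = F e := by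
    rw [hF]
    rw [← setIntegral_union (Ioc_disjoint_Ioc_of_le le_rfl) measurableSet_Ioc (hw_intIoc y s₀)
      (hw_intIoc s₀ e), Ioc_union_Ioc_eq_Ioc hys₀ hs₀e]
  have hGs₀' : |(|f s₀| ^ q) - |f y| ^ q| ≤ q * F s₀ := by
    simp only [hG] at hGs₀; linarith
  have final : |(|f e| ^ q) - |f y| ^ q| ≤ q * F e := by
    calc |(|f e| ^ q) - |f y| ^ q|
        ≤ |(|f e| ^ q) - |f s₀| ^ q| + |(|f s₀| ^ q) - |f y| ^ q| := abs_sub_le _ _ _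
      _ ≤ (q * ∫ t in Ioc s₀ e, w t) + q * F s₀ := by
          have := key1.trans (mul_le_mul_of_nonneg_left key2 (by linarith : (0:ℝ) ≤ q))
          linarith [this, hGs₀']
      _ = q * F e := by rw [← hadd]; ring
  have : 0 ≤ G e := by simp only [hG]; linarith
  linarith


include hf hg hftc in
lemma core {q : ℝ} (hq : 2 ≤ q) {y x : ℝ} (hyx : y ≤ x) :
    |(|f x| ^ q) - |f y| ^ q| ≤ q * ∫ t in Ioc y x, |f t| ^ (q - 1) * |g t| := by
  have hgi : IntegrableOn g (Ioc y x) :=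
    (hg.integrableOn_isCompact isCompact_Icc).mono_set Ioc_subset_Icc_self
  have hmeas : AEStronglyMeasurable g (volume.restrict (Ioc y x)) := hgi.aestronglyMeasurable
  set Fe : ℝ → ℝ → ℝ := fun ε t => (|f t| + ε) ^ (q - 1) * |g t| with hFe
  have hbound : IntegrableOn (fun t => (|f t| + 1) ^ (q - 1) * |g t|) (Ioc y x) := by
    have : IntegrableOn (fun t => (|f t| + 1) ^ (q - 1) * |g t|) (Icc y x) :=
      IntegrableOn.continuousOn_mul
        (Continuous.continuousOn (Continuous.rpow_const
          ((continuous_abs.comp hf).add continuous_const) (fun t => Or.inl (by positivity))))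
        ((hg.integrableOn_isCompact isCompact_Icc).abs) isCompact_Icc
    exact this.mono_set Ioc_subset_Icc_self
  have hmeasFe : ∀ᶠ ε in 𝓝[>] (0:ℝ),
      AEStronglyMeasurable (Fe ε) (volume.restrict (Ioc y x)) := by
    filter_upwards with ε
    exact (Continuous.continuousOn (Continuous.rpow_const
      ((continuous_abs.comp hf).add continuous_const)
      (fun t => Or.inr (by linarith)))).aestronglyMeasurable measurableSet_Ioc |>.mul
      hgi.abs.aestronglyMeasurable
  have hbd : ∀ᶠ ε in 𝓝[>] (0:ℝ), ∀ᵐ t ∂(volume.restrict (Ioc y x)),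
      ‖Fe ε t‖ ≤ (|f t| + 1) ^ (q - 1) * |g t| := by
    filter_upwards [Ioc_mem_nhdsGT (zero_lt_one (α := ℝ))] with ε hε
    filter_upwards with t
    have hb0 : (0:ℝ) ≤ |f t| + ε := by linarith [abs_nonneg (f t), hε.1.le]
    have h0 : 0 ≤ Fe ε t := mul_nonneg (Real.rpow_nonneg hb0 _) (abs_nonneg _)
    rw [Real.norm_eq_abs, abs_of_nonneg h0]
    exact mul_le_mul_of_nonneg_right
      (Real.rpow_le_rpow hb0 (by linarith [hε.2]) (by linarith)) (abs_nonneg _)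
  have hlim : ∀ᵐ t ∂(volume.restrict (Ioc y x)),
      Tendsto (fun ε => Fe ε t) (𝓝[>] (0:ℝ)) (𝓝 (|f t| ^ (q - 1) * |g t|)) := by
    filter_upwards with t
    have h1 : Tendsto (fun ε : ℝ => |f t| + ε) (𝓝[>] (0:ℝ)) (𝓝 (|f t|)) := by
      have hid : Tendsto (fun ε : ℝ => ε) (𝓝[>] (0:ℝ)) (𝓝 0) :=
        tendsto_id.mono_left nhdsWithin_le_nhds
      simpa using (tendsto_const_nhds (α := ℝ) (x := |f t|) (f := 𝓝[>] (0:ℝ))).add hid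
    have h2 : Tendsto (fun ε : ℝ => (|f t| + ε) ^ (q - 1)) (𝓝[>] (0:ℝ)) (𝓝 (|f t| ^ (q - 1))) :=
      (Real.continuousAt_rpow_const (|f t|) (q - 1) (Or.inr (by linarith))).tendsto.comp h1
    exact h2.mul tendsto_const_nhds
  have htend : Tendsto (fun ε => ∫ t in Ioc y x, Fe ε t) (𝓝[>] (0:ℝ))
      (𝓝 (∫ t in Ioc y x, |f t| ^ (q - 1) * |g t|)) :=
    tendsto_integral_filter_of_dominated_convergence _ hmeasFe hbd hbound hlim
  have hev : ∀ᶠ ε in 𝓝[>] (0:ℝ),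
      |(|f x| ^ q) - |f y| ^ q| ≤ q * ∫ t in Ioc y x, Fe ε t := by
    filter_upwards [self_mem_nhdsWithin] with ε hε
    exact core_eps hf hg hftc hq hε hyx
  have := ge_of_tendsto (htend.const_mul q) hev
  exact this
end Core

lemma lint_partition (F : ℝ → ℝ≥0∞) :
    ∫⁻ t, F t = ∑' k : ℤ, ∫⁻ t in Ioc (k : ℝ) ((k : ℝ) + 1), F t := by
  have hu : (⋃ k : ℤ, Ioc (k : ℝ) ((k : ℝ) + 1)) = univ := iUnion_Ioc_intCast ℝ
  have hd : Pairwise (Function.onFun Disjoint fun k : ℤ => Ioc (k : ℝ) ((k : ℝ) + 1)) := by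
    have := pairwise_disjoint_Ioc_add_intCast (0 : ℝ)
    simpa using this
  rw [← setLIntegral_univ, ← hu, lintegral_iUnion (fun k => measurableSet_Ioc) hd]

lemma tsum_shift (c : ℤ → ℝ≥0∞) : ∑' k : ℤ, c (k + 1) = ∑' k : ℤ, c k :=
  (Equiv.addRight (1 : ℤ)).tsum_eq c

lemma ennreal_half_mul (x : ℝ≥0∞) : x ^ (1/2 : ℝ) * x ^ (1/2 : ℝ) = x := by
  rw [← ENNReal.rpow_add_of_nonneg _ _ (by norm_num) (by norm_num)]
  norm_num

lemma ennreal_amgm (s t : ℝ≥0∞) : 2 * (s * t) ≤ s * s + t * t := by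
  induction s using ENNReal.recTopCoe with
  | top =>
    rcases eq_or_ne t 0 with ht | ht
    · simp [ht]
    · have : (⊤ : ℝ≥0∞) * ⊤ + t * t = ⊤ := by simp
      rw [this]; exact le_top
  | coe s =>
    induction t using ENNReal.recTopCoe with
    | top =>
      rcases eq_or_ne (s : ℝ≥0∞) 0 with hs | hs
      · simp [hs]
      · have : (s : ℝ≥0∞) * s + ⊤ * ⊤ = ⊤ := by simp
        rw [this]; exact le_top
    | coe t =>
      have h2 : ((2:ℝ≥0) : ℝ≥0∞) = 2 := by norm_num
      rw [← ENNReal.coe_mul, ← ENNReal.coe_mul, ← ENNReal.coe_mul, ← h2, ← ENNReal.coe_mul,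
        ← ENNReal.coe_add, ENNReal.coe_le_coe, ← NNReal.coe_le_coe]
      push_cast
      nlinarith [sq_nonneg ((s:ℝ) - t), (s:ℝ≥0).coe_nonneg, (t:ℝ≥0).coe_nonneg]

lemma tsum_cs (a b : ℤ → ℝ≥0∞) :
    ∑' j : ℤ, (a j) ^ (1/2 : ℝ) * (b j) ^ (1/2 : ℝ) ≤
      (∑' j : ℤ, a j) ^ (1/2 : ℝ) * (∑' j : ℤ, b j) ^ (1/2 : ℝ) := by
  have hconj : (2 : ℝ).HolderConjugate 2 := by constructor <;> norm_num
  have h := ENNReal.lintegral_mul_le_Lp_mul_Lq (Measure.count : Measure ℤ) hconj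
    (f := fun j => (a j) ^ (1/2 : ℝ)) (g := fun j => (b j) ^ (1/2 : ℝ))
    (measurable_of_countable _).aemeasurable (measurable_of_countable _).aemeasurable
  simp only [Pi.mul_apply, lintegral_count] at h
  have hcol : ∀ x : ℝ≥0∞, (x ^ (1/2:ℝ)) ^ (2:ℝ) = x := by
    intro x
    rw [← ENNReal.rpow_mul]
    norm_num
  calc ∑' j : ℤ, (a j) ^ (1/2 : ℝ) * (b j) ^ (1/2 : ℝ)
      ≤ (∑' j : ℤ, ((a j) ^ (1/2:ℝ)) ^ (2:ℝ)) ^ (1/2:ℝ) *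
        (∑' j : ℤ, ((b j) ^ (1/2:ℝ)) ^ (2:ℝ)) ^ (1/2:ℝ) := h
    _ = (∑' j : ℤ, a j) ^ (1/2 : ℝ) * (∑' j : ℤ, b j) ^ (1/2 : ℝ) := by
        simp only [hcol]

lemma tsum_mul_le (a b : ℤ → ℝ≥0∞) :
    ∑' j : ℤ, a j * b j ≤ (∑' j : ℤ, a j) * (∑' j : ℤ, b j) := by
  calc ∑' j : ℤ, a j * b j ≤ ∑' j : ℤ, a j * (∑' i : ℤ, b i) :=
      Summable.tsum_le_tsum (fun j => mul_le_mul_right (ENNReal.le_tsum j) _)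
        ENNReal.summable ENNReal.summable
    _ = (∑' j : ℤ, a j) * (∑' j : ℤ, b j) := ENNReal.tsum_mul_right

section Holder
variable {f g : ℝ → ℝ} (hf : Continuous f) (hg : LocallyIntegrable g) {q : ℝ} (hq : 2 ≤ q)

include hf hg in
lemma line_holder :
    ∫⁻ t, (‖f t‖₊ : ℝ≥0∞) ^ (q - 1) * ‖g t‖₊ ≤
      (∫⁻ t, ((‖f t‖₊ : ℝ≥0∞) ^ (q - 1)) ^ (2:ℝ)) ^ (1/2 : ℝ) *
        (∫⁻ t, (‖g t‖₊ : ℝ≥0∞) ^ (2:ℝ)) ^ (1/2 : ℝ) := by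
  have hconj : (2 : ℝ).HolderConjugate 2 := by constructor <;> norm_num
  have hmf : AEMeasurable (fun t => (‖f t‖₊ : ℝ≥0∞) ^ (q - 1)) volume :=
    ((hf.measurable.nnnorm.coe_nnreal_ennreal).pow_const _).aemeasurable
  have hmg : AEMeasurable (fun t => (‖g t‖₊ : ℝ≥0∞)) volume :=
    hg.aestronglyMeasurable.aemeasurable.nnnorm.coe_nnreal_ennreal
  have h := ENNReal.lintegral_mul_le_Lp_mul_Lq (volume : Measure ℝ) hconj hmf hmg
  simpa using h
end Holder

lemma ofRealAbsRpow {s : ℝ} (hs : 0 ≤ s) (r : ℝ) :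
    ENNReal.ofReal (|r| ^ s) = (‖r‖₊ : ℝ≥0∞) ^ s := by
  rw [← ENNReal.ofReal_rpow_of_nonneg (abs_nonneg r) hs, ← Real.enorm_eq_ofReal_abs, enorm_eq_nnnorm]

lemma exists_small_left {f : ℝ → ℝ}
    (hf2 : ∫⁻ t, (‖f t‖₊ : ℝ≥0∞) ^ (2:ℝ) ≠ ⊤) {ε : ℝ} (hε : 0 < ε) (a : ℝ) :
    ∃ y ≤ a, |f y| ≤ ε := by
  by_contra hcon
  push_neg at hcon
  have hlow : ∀ y ∈ Iic a, (ENNReal.ofReal ε) ^ (2:ℝ) ≤ (‖f y‖₊ : ℝ≥0∞) ^ (2:ℝ) := by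
    intro y hy
    refine ENNReal.rpow_le_rpow ?_ (by norm_num)
    rw [← enorm_eq_nnnorm, Real.enorm_eq_ofReal_abs]
    exact ENNReal.ofReal_le_ofReal (hcon y hy).le
  have h1 : (ENNReal.ofReal ε) ^ (2:ℝ) * volume (Iic a) ≤ ∫⁻ t in Iic a, (‖f t‖₊ : ℝ≥0∞) ^ (2:ℝ) := by
    rw [← setLIntegral_const (Iic a) _]
    exact setLIntegral_mono' measurableSet_Iic hlow
  have h2 : (ENNReal.ofReal ε) ^ (2:ℝ) * volume (Iic a) = ⊤ := by
    rw [Real.volume_Iic, ENNReal.mul_top]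
    simp only [ne_eq, ENNReal.rpow_eq_zero_iff, not_or, not_and, not_lt]
    constructor
    · intro h; exact absurd h (by simp [ENNReal.ofReal_eq_zero]; linarith)
    · intro h; exact absurd h (by simp)
  exact hf2 (top_le_iff.1 (h2 ▸ h1.trans ((setLIntegral_le_lintegral _ _))))

lemma exists_small_right {f : ℝ → ℝ}
    (hf2 : ∫⁻ t, (‖f t‖₊ : ℝ≥0∞) ^ (2:ℝ) ≠ ⊤) {ε : ℝ} (hε : 0 < ε) (a : ℝ) :
    ∃ z, a ≤ z ∧ |f z| ≤ ε := by
  by_contra hcon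
  push_neg at hcon
  have hlow : ∀ y ∈ Ici a, (ENNReal.ofReal ε) ^ (2:ℝ) ≤ (‖f y‖₊ : ℝ≥0∞) ^ (2:ℝ) := by
    intro y hy
    refine ENNReal.rpow_le_rpow ?_ (by norm_num)
    rw [← enorm_eq_nnnorm, Real.enorm_eq_ofReal_abs]
    exact ENNReal.ofReal_le_ofReal (hcon y hy).le
  have h1 : (ENNReal.ofReal ε) ^ (2:ℝ) * volume (Ici a) ≤ ∫⁻ t in Ici a, (‖f t‖₊ : ℝ≥0∞) ^ (2:ℝ) := by
    rw [← setLIntegral_const (Ici a) _]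
    exact setLIntegral_mono' measurableSet_Ici hlow
  have h2 : (ENNReal.ofReal ε) ^ (2:ℝ) * volume (Ici a) = ⊤ := by
    rw [Real.volume_Ici, ENNReal.mul_top]
    simp only [ne_eq, ENNReal.rpow_eq_zero_iff, not_or, not_and, not_lt]
    constructor
    · intro h; exact absurd h (by simp [ENNReal.ofReal_eq_zero]; linarith)
    · intro h; exact absurd h (by simp)
  exact hf2 (top_le_iff.1 (h2 ▸ h1.trans ((setLIntegral_le_lintegral _ _))))

section Line
variable {f g : ℝ → ℝ} (hf : Continuous f) (hg : LocallyIntegrable g)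
  (hftc : ∀ a b : ℝ, f b - f a = ∫ t in a..b, g t) {q : ℝ} (hq : 2 ≤ q)

-- integrand integrability on compacts
include hf hg hq in
lemma wInt (u v : ℝ) : IntegrableOn (fun t => |f t| ^ (q - 1) * |g t|) (Ioc u v) := by
  have h0 : IntegrableOn (fun t => |f t| ^ (q - 1) * |g t|) (Icc u v) :=
    IntegrableOn.continuousOn_mul
      (Continuous.continuousOn (Continuous.rpow_const (continuous_abs.comp hf)
        (fun t => Or.inr (by linarith))))
      ((hg.integrableOn_isCompact isCompact_Icc).abs) isCompact_Icc
  exact h0.mono_set Ioc_subset_Icc_self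

include hf hg hq in
lemma wIntConv (u v : ℝ) :
    ENNReal.ofReal (∫ t in Ioc u v, |f t| ^ (q - 1) * |g t|) =
      ∫⁻ t in Ioc u v, (‖f t‖₊ : ℝ≥0∞) ^ (q - 1) * ‖g t‖₊ := by
  rw [MeasureTheory.ofReal_integral_eq_lintegral_ofReal (wInt hf hg hq u v)
    (Filter.Eventually.of_forall fun t =>
      mul_nonneg (Real.rpow_nonneg (abs_nonneg _) _) (abs_nonneg _))]
  refine lintegral_congr fun t => ?_
  rw [ENNReal.ofReal_mul (Real.rpow_nonneg (abs_nonneg _) _), ofRealAbsRpow (by linarith),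
    ← Real.enorm_eq_ofReal_abs, enorm_eq_nnnorm]

-- the sup bound
include hf hg hftc hq in
lemma line_sup (hf2 : ∫⁻ t, (‖f t‖₊ : ℝ≥0∞) ^ (2:ℝ) ≠ ⊤) (x : ℝ) :
    2 * (‖f x‖₊ : ℝ≥0∞) ^ q ≤
      ENNReal.ofReal q * ∫⁻ t, (‖f t‖₊ : ℝ≥0∞) ^ (q - 1) * ‖g t‖₊ := by
  set L : ℝ≥0∞ := ∫⁻ t, (‖f t‖₊ : ℝ≥0∞) ^ (q - 1) * ‖g t‖₊ with hL
  have hstep : ∀ ε : ℝ, 0 < ε →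
      2 * (‖f x‖₊ : ℝ≥0∞) ^ q ≤ ENNReal.ofReal q * L + ENNReal.ofReal (2 * ε ^ q) := by
    intro ε hε
    obtain ⟨y, hy, hfy⟩ := exists_small_left hf2 hε x
    obtain ⟨z, hz, hfz⟩ := exists_small_right hf2 hε x
    have c1 := core hf hg hftc hq hy
    have c2 := core hf hg hftc hq hz
    have hεq : ∀ r : ℝ, |f r| ≤ ε → |f r| ^ q ≤ ε ^ q := fun r hr =>
      Real.rpow_le_rpow (abs_nonneg _) hr (by linarith)
    have hI1 : (0:ℝ) ≤ ∫ t in Ioc y x, |f t| ^ (q - 1) * |g t| :=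
      setIntegral_nonneg measurableSet_Ioc fun t _ =>
        mul_nonneg (Real.rpow_nonneg (abs_nonneg _) _) (abs_nonneg _)
    have hI2 : (0:ℝ) ≤ ∫ t in Ioc x z, |f t| ^ (q - 1) * |g t| :=
      setIntegral_nonneg measurableSet_Ioc fun t _ =>
        mul_nonneg (Real.rpow_nonneg (abs_nonneg _) _) (abs_nonneg _)
    have r1 : |f x| ^ q ≤ ε ^ q + q * ∫ t in Ioc y x, |f t| ^ (q - 1) * |g t| := by
      have := abs_le.1 c1
      have h := hεq y hfy
      linarith [this.2, (abs_le.1 c1).1]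
    have r2 : |f x| ^ q ≤ ε ^ q + q * ∫ t in Ioc x z, |f t| ^ (q - 1) * |g t| := by
      have := abs_le.1 c2
      have h := hεq z hfz
      linarith [this.1]
    -- to ENNReal
    have e1 : (‖f x‖₊ : ℝ≥0∞) ^ q ≤ ENNReal.ofReal (ε ^ q) +
        ENNReal.ofReal q * ∫⁻ t in Ioc y x, (‖f t‖₊ : ℝ≥0∞) ^ (q - 1) * ‖g t‖₊ := by
      rw [← ofRealAbsRpow (by linarith : (0:ℝ) ≤ q), ← wIntConv hf hg hq,
        ← ENNReal.ofReal_mul (by linarith : (0:ℝ) ≤ q), ← ENNReal.ofReal_add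
          (Real.rpow_nonneg (le_of_lt hε) q) (by positivity)]
      exact ENNReal.ofReal_le_ofReal r1
    have e2 : (‖f x‖₊ : ℝ≥0∞) ^ q ≤ ENNReal.ofReal (ε ^ q) +
        ENNReal.ofReal q * ∫⁻ t in Ioc x z, (‖f t‖₊ : ℝ≥0∞) ^ (q - 1) * ‖g t‖₊ := by
      rw [← ofRealAbsRpow (by linarith : (0:ℝ) ≤ q), ← wIntConv hf hg hq,
        ← ENNReal.ofReal_mul (by linarith : (0:ℝ) ≤ q), ← ENNReal.ofReal_add
          (Real.rpow_nonneg (le_of_lt hε) q) (by positivity)]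
      exact ENNReal.ofReal_le_ofReal r2
    have hdisj : Disjoint (Ioc y x) (Ioc x z) := (Ioc_disjoint_Ioc_of_le le_rfl)
    have hsum : (∫⁻ t in Ioc y x, (‖f t‖₊ : ℝ≥0∞) ^ (q - 1) * ‖g t‖₊) +
        (∫⁻ t in Ioc x z, (‖f t‖₊ : ℝ≥0∞) ^ (q - 1) * ‖g t‖₊) ≤ L := by
      rw [← lintegral_union measurableSet_Ioc hdisj]
      exact setLIntegral_le_lintegral _ _
    calc 2 * (‖f x‖₊ : ℝ≥0∞) ^ q = (‖f x‖₊ : ℝ≥0∞) ^ q + (‖f x‖₊ : ℝ≥0∞) ^ q := two_mul _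
      _ ≤ (ENNReal.ofReal (ε ^ q) + ENNReal.ofReal q * ∫⁻ t in Ioc y x,
            (‖f t‖₊ : ℝ≥0∞) ^ (q - 1) * ‖g t‖₊) +
          (ENNReal.ofReal (ε ^ q) + ENNReal.ofReal q * ∫⁻ t in Ioc x z,
            (‖f t‖₊ : ℝ≥0∞) ^ (q - 1) * ‖g t‖₊) := add_le_add e1 e2
      _ = ENNReal.ofReal q * ((∫⁻ t in Ioc y x, (‖f t‖₊ : ℝ≥0∞) ^ (q - 1) * ‖g t‖₊) +
            (∫⁻ t in Ioc x z, (‖f t‖₊ : ℝ≥0∞) ^ (q - 1) * ‖g t‖₊)) +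
          (ENNReal.ofReal (ε ^ q) + ENNReal.ofReal (ε ^ q)) := by ring
      _ ≤ ENNReal.ofReal q * L + (ENNReal.ofReal (ε ^ q) + ENNReal.ofReal (ε ^ q)) := by
          gcongr
      _ = ENNReal.ofReal q * L + ENNReal.ofReal (2 * ε ^ q) := by
          rw [← ENNReal.ofReal_add (Real.rpow_nonneg (le_of_lt hε) q)
            (Real.rpow_nonneg (le_of_lt hε) q)]
          ring_nf
  -- limit ε → 0
  have htends : Tendsto (fun ε : ℝ => ENNReal.ofReal q * L + ENNReal.ofReal (2 * ε ^ q))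
      (𝓝[>] (0:ℝ)) (𝓝 (ENNReal.ofReal q * L + 0)) := by
    refine Tendsto.const_add _ ?_
    have hr : Tendsto (fun ε : ℝ => 2 * ε ^ q) (𝓝[>] (0:ℝ)) (𝓝 0) := by
      have h1 : Tendsto (fun ε : ℝ => ε ^ q) (𝓝 (0:ℝ)) (𝓝 ((0:ℝ) ^ q)) :=
        (Real.continuousAt_rpow_const 0 q (Or.inr (by linarith))).tendsto
      rw [Real.zero_rpow (by linarith : q ≠ 0)] at h1
      simpa using (h1.const_mul (2:ℝ)).mono_left nhdsWithin_le_nhds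
    simpa using (ENNReal.tendsto_ofReal hr)
  rw [add_zero] at htends
  refine ge_of_tendsto htends ?_
  filter_upwards [self_mem_nhdsWithin] with ε hε
  exact hstep ε hε

include hf hg hftc hq in
lemma line_edge (k : ℝ) :
    2 * ∫⁻ t in Ioc k (k+1), (‖f t‖₊ : ℝ≥0∞) ^ q ≤
      ((‖f k‖₊ : ℝ≥0∞) ^ q + (‖f (k+1)‖₊ : ℝ≥0∞) ^ q) +
        ENNReal.ofReal q * ∫⁻ t in Ioc k (k+1), (‖f t‖₊ : ℝ≥0∞) ^ (q - 1) * ‖g t‖₊ := by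
  set I₀ : ℝ := ∫ t in Ioc k (k+1), |f t| ^ (q - 1) * |g t| with hI₀
  have hI₀nn : 0 ≤ I₀ := setIntegral_nonneg measurableSet_Ioc fun t _ =>
    mul_nonneg (Real.rpow_nonneg (abs_nonneg _) _) (abs_nonneg _)
  have hwnn : 0 ≤ᵐ[volume.restrict (Ioc k (k+1))] fun t => |f t| ^ (q - 1) * |g t| :=
    Filter.Eventually.of_forall fun t =>
      mul_nonneg (Real.rpow_nonneg (abs_nonneg _) _) (abs_nonneg _)
  have hpt : ∀ x ∈ Icc k (k+1), 2 * |f x| ^ q ≤ |f k| ^ q + |f (k+1)| ^ q + q * I₀ := by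
    intro x hx
    have c1 := abs_le.1 (core hf hg hftc hq hx.1)
    have c2 := abs_le.1 (core hf hg hftc hq hx.2)
    have hadd : (∫ t in Ioc k x, |f t| ^ (q - 1) * |g t|) +
        (∫ t in Ioc x (k+1), |f t| ^ (q - 1) * |g t|) = I₀ := by
      rw [hI₀, ← setIntegral_union (Ioc_disjoint_Ioc_of_le le_rfl) measurableSet_Ioc
        ((wInt hf hg hq k (k+1)).mono_set (Ioc_subset_Ioc le_rfl hx.2))
        ((wInt hf hg hq k (k+1)).mono_set (Ioc_subset_Ioc hx.1 le_rfl)),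
        Ioc_union_Ioc_eq_Ioc hx.1 hx.2]
    have hqpos : (0:ℝ) ≤ q := by linarith
    nlinarith [c1.2, c2.1]
  -- integrate pointwise bound over the edge
  have hfq : Continuous fun s : ℝ => |f s| ^ q :=
    Continuous.rpow_const (continuous_abs.comp hf) fun t => Or.inr (by linarith)
  have hint0 : IntegrableOn (fun x => 2 * |f x| ^ q) (Icc k (k+1)) :=
    (hfq.integrableOn_Icc).const_mul 2
  have hint1 : IntegrableOn (fun x => 2 * |f x| ^ q) (Ioc k (k+1)) :=
    hint0.mono_set Ioc_subset_Icc_self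
  have hintc : IntegrableOn (fun _ : ℝ => |f k| ^ q + |f (k+1)| ^ q + q * I₀)
      (Ioc k (k+1)) := integrableOn_const (by rw [Real.volume_Ioc]; exact ENNReal.ofReal_ne_top)
  have hmono := setIntegral_mono_on hint1 hintc measurableSet_Ioc
    (fun x hx => hpt x (Ioc_subset_Icc_self hx))
  have hconstint : ∫ _ in Ioc k (k+1), (|f k| ^ q + |f (k+1)| ^ q + q * I₀) =
      |f k| ^ q + |f (k+1)| ^ q + q * I₀ := by
    rw [setIntegral_const]
    rw [Real.volume_real_Ioc]
    norm_num
  rw [hconstint] at hmono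
  -- convert to ENNReal
  have hlhs : ENNReal.ofReal (∫ x in Ioc k (k+1), 2 * |f x| ^ q) =
      2 * ∫⁻ t in Ioc k (k+1), (‖f t‖₊ : ℝ≥0∞) ^ q := by
    rw [MeasureTheory.ofReal_integral_eq_lintegral_ofReal hint1
      (Filter.Eventually.of_forall fun t => by positivity)]
    have : ∀ t : ℝ, ENNReal.ofReal (2 * |f t| ^ q) = 2 * (‖f t‖₊ : ℝ≥0∞) ^ q := by
      intro t
      rw [ENNReal.ofReal_mul (by norm_num), ofRealAbsRpow (by linarith)]
      norm_num
    rw [lintegral_congr this]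
    rw [lintegral_const_mul' _ _ (by norm_num)]
  calc 2 * ∫⁻ t in Ioc k (k+1), (‖f t‖₊ : ℝ≥0∞) ^ q
      = ENNReal.ofReal (∫ x in Ioc k (k+1), 2 * |f x| ^ q) := hlhs.symm
    _ ≤ ENNReal.ofReal (|f k| ^ q + |f (k+1)| ^ q + q * I₀) :=
        ENNReal.ofReal_le_ofReal hmono
    _ ≤ ((‖f k‖₊ : ℝ≥0∞) ^ q + (‖f (k+1)‖₊ : ℝ≥0∞) ^ q) +
        ENNReal.ofReal q * ∫⁻ t in Ioc k (k+1), (‖f t‖₊ : ℝ≥0∞) ^ (q - 1) * ‖g t‖₊ := by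
        rw [ENNReal.ofReal_add (by positivity) (by positivity),
          ENNReal.ofReal_add (by positivity) (by positivity),
          ofRealAbsRpow (by linarith : (0:ℝ) ≤ q), ofRealAbsRpow (by linarith : (0:ℝ) ≤ q)]
        refine add_le_add le_rfl ?_
        rw [← wIntConv hf hg hq, ← ENNReal.ofReal_mul (by linarith : (0:ℝ) ≤ q)]

include hf hg hftc hq in
lemma line_lq :
    2 * ∫⁻ t, (‖f t‖₊ : ℝ≥0∞) ^ q ≤
      (∑' k : ℤ, 2 * (‖f (k : ℝ)‖₊ : ℝ≥0∞) ^ q) +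
        ENNReal.ofReal q * ∫⁻ t, (‖f t‖₊ : ℝ≥0∞) ^ (q - 1) * ‖g t‖₊ := by
  rw [lint_partition (fun t => (‖f t‖₊ : ℝ≥0∞) ^ q),
    lint_partition (fun t => (‖f t‖₊ : ℝ≥0∞) ^ (q - 1) * ‖g t‖₊)]
  rw [← ENNReal.tsum_mul_left, ← ENNReal.tsum_mul_left]
  calc ∑' k : ℤ, 2 * ∫⁻ t in Ioc (k : ℝ) ((k : ℝ) + 1), (‖f t‖₊ : ℝ≥0∞) ^ q
      ≤ ∑' k : ℤ, (((‖f (k : ℝ)‖₊ : ℝ≥0∞) ^ q + (‖f ((k : ℝ) + 1)‖₊ : ℝ≥0∞) ^ q) +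
          ENNReal.ofReal q * ∫⁻ t in Ioc (k : ℝ) ((k : ℝ) + 1),
            (‖f t‖₊ : ℝ≥0∞) ^ (q - 1) * ‖g t‖₊) :=
        Summable.tsum_le_tsum (fun k => line_edge hf hg hftc hq (k : ℝ))
          ENNReal.summable ENNReal.summable
    _ = ((∑' k : ℤ, (‖f (k : ℝ)‖₊ : ℝ≥0∞) ^ q) +
          (∑' k : ℤ, (‖f ((k : ℝ) + 1)‖₊ : ℝ≥0∞) ^ q)) +
          ∑' k : ℤ, ENNReal.ofReal q * ∫⁻ t in Ioc (k : ℝ) ((k : ℝ) + 1),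
            (‖f t‖₊ : ℝ≥0∞) ^ (q - 1) * ‖g t‖₊ := by
        rw [ENNReal.tsum_add, ENNReal.tsum_add]
    _ = (∑' k : ℤ, 2 * (‖f (k : ℝ)‖₊ : ℝ≥0∞) ^ q) +
          ∑' k : ℤ, ENNReal.ofReal q * ∫⁻ t in Ioc (k : ℝ) ((k : ℝ) + 1),
            (‖f t‖₊ : ℝ≥0∞) ^ (q - 1) * ‖g t‖₊ := by
        congr 1
        have hsh : (∑' k : ℤ, (‖f ((k : ℝ) + 1)‖₊ : ℝ≥0∞) ^ q) =
            ∑' k : ℤ, (‖f (k : ℝ)‖₊ : ℝ≥0∞) ^ q := by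
          have := tsum_shift (fun k : ℤ => (‖f (k : ℝ)‖₊ : ℝ≥0∞) ^ q)
          rw [← this]
          refine tsum_congr fun k => ?_
          push_cast
          ring_nf
        rw [hsh, ← ENNReal.tsum_add]
        refine tsum_congr fun k => ?_
        rw [two_mul]
end Line


lemma ftc2 {f g : ℝ → ℝ} (hg : LocallyIntegrable g)
    (h : ∀ x, (∫ t in (0:ℝ)..x, g t) = f x - f 0) :
    ∀ a b : ℝ, f b - f a = ∫ t in a..b, g t := by
  intro a b
  have hint : ∀ u v : ℝ, IntervalIntegrable g volume u v := fun u v =>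
    intervalIntegrable_iff.2
      ((hg.integrableOn_isCompact isCompact_uIcc).mono_set Set.uIoc_subset_uIcc)
  have := intervalIntegral.integral_interval_sub_left (hint 0 b) (hint 0 a)
  rw [h a, h b] at this
  rw [← this]; ring


end GridGNAux

open GridGNAux

noncomputable section

/-- **Iteration step for the two-dimensional Gagliardo–Nirenberg inequality**:
for every `p ∈ [2,∞)` and every `u ∈ H¹(𝒢)`,
`‖u‖_{L^{p+2}(𝒢)}^{1+p/2} ≤ ((p+2)/4) ‖u‖_{L^p(𝒢)}^{p/2} ‖u'‖_{L²(𝒢)}`. -/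
theorem grid_gagliardo_nirenberg_iteration (p : ℝ) (hp : 2 ≤ p)
    (u : GridFunc) (hu : u.MemH1) :
    u.lpNorm (p + 2) ^ (1 + p / 2) ≤
      ENNReal.ofReal ((p + 2) / 4) * u.lpNorm p ^ (p / 2) * u.derivLpNorm 2 := by
  obtain ⟨hch, hcw, hih, hiw, hfh, hfw, hL2, hD2⟩ := hu
  set q : ℝ := p / 2 + 1 with hqdef
  have hq : 2 ≤ q := by rw [hqdef]; linarith
  have hq1 : q - 1 = p / 2 := by rw [hqdef]; ring
  -- FTC in two-point form
  have ftch : ∀ j, ∀ a b : ℝ, u.h j b - u.h j a = ∫ t in a..b, u.hd j t :=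
    fun j => ftc2 (hih j) (hfh j)
  have ftcw : ∀ k, ∀ a b : ℝ, u.w k b - u.w k a = ∫ t in a..b, u.wd k t :=
    fun k => ftc2 (hiw k) (hfw k)
  -- per-line L² finiteness
  have hfinh : ∀ j : ℤ, (∫⁻ t, (‖u.h j t‖₊ : ℝ≥0∞) ^ (2:ℝ)) ≠ ⊤ := by
    intro j
    refine ne_top_of_le_ne_top hL2.ne ?_
    exact le_trans (ENNReal.le_tsum j) le_self_add
  have hfinw : ∀ k : ℤ, (∫⁻ t, (‖u.w k t‖₊ : ℝ≥0∞) ^ (2:ℝ)) ≠ ⊤ := by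
    intro k
    refine ne_top_of_le_ne_top hL2.ne ?_
    exact le_trans (ENNReal.le_tsum k) le_add_self
  -- quantities
  set cq : ℝ≥0∞ := ENNReal.ofReal q with hcq
  set αh : ℤ → ℝ≥0∞ := fun j => ∫⁻ t, (‖u.h j t‖₊ : ℝ≥0∞) ^ (q - 1) * ‖u.hd j t‖₊ with hαh
  set αv : ℤ → ℝ≥0∞ := fun k => ∫⁻ t, (‖u.w k t‖₊ : ℝ≥0∞) ^ (q - 1) * ‖u.wd k t‖₊ with hαv
  set ah : ℤ → ℝ≥0∞ := fun j => ∫⁻ t, (‖u.h j t‖₊ : ℝ≥0∞) ^ p with hah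
  set av : ℤ → ℝ≥0∞ := fun k => ∫⁻ t, (‖u.w k t‖₊ : ℝ≥0∞) ^ p with hav
  set bh : ℤ → ℝ≥0∞ := fun j => ∫⁻ t, (‖u.hd j t‖₊ : ℝ≥0∞) ^ (2:ℝ) with hbh
  set bv : ℤ → ℝ≥0∞ := fun k => ∫⁻ t, (‖u.wd k t‖₊ : ℝ≥0∞) ^ (2:ℝ) with hbv
  set A := ∑' j : ℤ, αh j with hA
  set B := ∑' k : ℤ, αv k with hB
  set sah := ∑' j : ℤ, ah j with hsah
  set sav := ∑' k : ℤ, av k with hsav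
  set sbh := ∑' j : ℤ, bh j with hsbh
  set sbv := ∑' k : ℤ, bv k with hsbv
  -- sup bounds
  have hsuph : ∀ (j : ℤ) (x : ℝ), 2 * (‖u.h j x‖₊ : ℝ≥0∞) ^ q ≤ cq * αh j :=
    fun j x => line_sup (hch j) (hih j) (ftch j) hq (hfinh j) x
  have hsupv : ∀ (k : ℤ) (y : ℝ), 2 * (‖u.w k y‖₊ : ℝ≥0∞) ^ q ≤ cq * αv k :=
    fun k y => line_sup (hcw k) (hiw k) (ftcw k) hq (hfinw k) y
  -- Hölder per line
  have hRP : ∀ x : ℝ≥0∞, (x ^ (q - 1)) ^ (2:ℝ) = x ^ p := by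
    intro x
    rw [← ENNReal.rpow_mul]
    congr 1
    rw [hq1]; ring
  have hαhb : ∀ j : ℤ, αh j ≤ (ah j) ^ (1/2 : ℝ) * (bh j) ^ (1/2 : ℝ) := by
    intro j
    have := line_holder (hch j) (hih j) (q := q)
    simp only [hRP] at this
    exact this
  have hαvb : ∀ k : ℤ, αv k ≤ (av k) ^ (1/2 : ℝ) * (bv k) ^ (1/2 : ℝ) := by
    intro k
    have := line_holder (hcw k) (hiw k) (q := q)
    simp only [hRP] at this
    exact this
  -- Lq line bounds with vertex sums
  have hlqh : ∀ j : ℤ, 2 * ∫⁻ t, (‖u.h j t‖₊ : ℝ≥0∞) ^ q ≤ cq * (B + αh j) := by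
    intro j
    refine le_trans (line_lq (hch j) (hih j) (ftch j) hq) ?_
    have hvertex : (∑' k : ℤ, 2 * (‖u.h j (k : ℝ)‖₊ : ℝ≥0∞) ^ q) ≤ cq * B := by
      calc (∑' k : ℤ, 2 * (‖u.h j (k : ℝ)‖₊ : ℝ≥0∞) ^ q)
          = ∑' k : ℤ, 2 * (‖u.w k (j : ℝ)‖₊ : ℝ≥0∞) ^ q := by
            refine tsum_congr fun k => ?_
            rw [u.compat j k]
        _ ≤ ∑' k : ℤ, cq * αv k :=
            Summable.tsum_le_tsum (fun k => hsupv k (j : ℝ)) ENNReal.summable ENNReal.summable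
        _ = cq * B := ENNReal.tsum_mul_left
    rw [mul_add]
    exact add_le_add hvertex le_rfl
  have hlqv : ∀ k : ℤ, 2 * ∫⁻ t, (‖u.w k t‖₊ : ℝ≥0∞) ^ q ≤ cq * (A + αv k) := by
    intro k
    refine le_trans (line_lq (hcw k) (hiw k) (ftcw k) hq) ?_
    have hvertex : (∑' j : ℤ, 2 * (‖u.w k (j : ℝ)‖₊ : ℝ≥0∞) ^ q) ≤ cq * A := by
      calc (∑' j : ℤ, 2 * (‖u.w k (j : ℝ)‖₊ : ℝ≥0∞) ^ q)
          = ∑' j : ℤ, 2 * (‖u.h j (k : ℝ)‖₊ : ℝ≥0∞) ^ q := by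
            refine tsum_congr fun j => ?_
            rw [u.compat j k]
        _ ≤ ∑' j : ℤ, cq * αh j :=
            Summable.tsum_le_tsum (fun j => hsuph j (k : ℝ)) ENNReal.summable ENNReal.summable
        _ = cq * A := ENNReal.tsum_mul_left
    rw [mul_add]
    exact add_le_add hvertex le_rfl
  -- per-line L^{p+2} bounds
  have hqq : q + q = p + 2 := by rw [hqdef]; ring
  have hsplit : ∀ r : ℝ, (ENNReal.ofNNReal ‖r‖₊) ^ (p + 2) =
      (‖r‖₊ : ℝ≥0∞) ^ q * (‖r‖₊ : ℝ≥0∞) ^ q := by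
    intro r
    rw [← ENNReal.rpow_add_of_nonneg q q (by linarith) (by linarith), hqq]
  have hlineh : ∀ j : ℤ, 4 * ∫⁻ t, (‖u.h j t‖₊ : ℝ≥0∞) ^ (p + 2) ≤
      (cq * αh j) * (cq * (B + αh j)) := by
    intro j
    have hmeas : Measurable fun t => 2 * (‖u.h j t‖₊ : ℝ≥0∞) ^ q :=
      (measurable_const.mul (((hch j).measurable.nnnorm.coe_nnreal_ennreal).pow_const q))
    calc 4 * ∫⁻ t, (‖u.h j t‖₊ : ℝ≥0∞) ^ (p + 2)
        = ∫⁻ t, 4 * (‖u.h j t‖₊ : ℝ≥0∞) ^ (p + 2) :=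
          (lintegral_const_mul' 4 _ (by norm_num)).symm
      _ ≤ ∫⁻ t, (cq * αh j) * (2 * (‖u.h j t‖₊ : ℝ≥0∞) ^ q) := by
          refine lintegral_mono fun t => ?_
          rw [hsplit (u.h j t)]
          calc 4 * ((‖u.h j t‖₊ : ℝ≥0∞) ^ q * (‖u.h j t‖₊ : ℝ≥0∞) ^ q)
              = (2 * (‖u.h j t‖₊ : ℝ≥0∞) ^ q) * (2 * (‖u.h j t‖₊ : ℝ≥0∞) ^ q) := by ring
            _ ≤ (cq * αh j) * (2 * (‖u.h j t‖₊ : ℝ≥0∞) ^ q) :=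
                mul_le_mul_left (hsuph j t) _
      _ = (cq * αh j) * ∫⁻ t, 2 * (‖u.h j t‖₊ : ℝ≥0∞) ^ q :=
          lintegral_const_mul _ hmeas
      _ = (cq * αh j) * (2 * ∫⁻ t, (‖u.h j t‖₊ : ℝ≥0∞) ^ q) := by
          rw [lintegral_const_mul' 2 _ (by norm_num)]
      _ ≤ (cq * αh j) * (cq * (B + αh j)) := mul_le_mul_right (hlqh j) _
  have hlinev : ∀ k : ℤ, 4 * ∫⁻ t, (‖u.w k t‖₊ : ℝ≥0∞) ^ (p + 2) ≤
      (cq * αv k) * (cq * (A + αv k)) := by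
    intro k
    have hmeas : Measurable fun t => 2 * (‖u.w k t‖₊ : ℝ≥0∞) ^ q :=
      (measurable_const.mul (((hcw k).measurable.nnnorm.coe_nnreal_ennreal).pow_const q))
    calc 4 * ∫⁻ t, (‖u.w k t‖₊ : ℝ≥0∞) ^ (p + 2)
        = ∫⁻ t, 4 * (‖u.w k t‖₊ : ℝ≥0∞) ^ (p + 2) :=
          (lintegral_const_mul' 4 _ (by norm_num)).symm
      _ ≤ ∫⁻ t, (cq * αv k) * (2 * (‖u.w k t‖₊ : ℝ≥0∞) ^ q) := by
          refine lintegral_mono fun t => ?_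
          rw [hsplit (u.w k t)]
          calc 4 * ((‖u.w k t‖₊ : ℝ≥0∞) ^ q * (‖u.w k t‖₊ : ℝ≥0∞) ^ q)
              = (2 * (‖u.w k t‖₊ : ℝ≥0∞) ^ q) * (2 * (‖u.w k t‖₊ : ℝ≥0∞) ^ q) := by ring
            _ ≤ (cq * αv k) * (2 * (‖u.w k t‖₊ : ℝ≥0∞) ^ q) :=
                mul_le_mul_left (hsupv k t) _
      _ = (cq * αv k) * ∫⁻ t, 2 * (‖u.w k t‖₊ : ℝ≥0∞) ^ q :=
          lintegral_const_mul _ hmeas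
      _ = (cq * αv k) * (2 * ∫⁻ t, (‖u.w k t‖₊ : ℝ≥0∞) ^ q) := by
          rw [lintegral_const_mul' 2 _ (by norm_num)]
      _ ≤ (cq * αv k) * (cq * (A + αv k)) := mul_le_mul_right (hlqv k) _
  -- sum over lines
  have hα2h : (∑' j : ℤ, αh j * αh j) ≤ sah * sbh := by
    calc (∑' j : ℤ, αh j * αh j)
        ≤ ∑' j : ℤ, ah j * bh j := by
          refine Summable.tsum_le_tsum (fun j => ?_) ENNReal.summable ENNReal.summable
          calc αh j * αh j ≤ ((ah j) ^ (1/2:ℝ) * (bh j) ^ (1/2:ℝ)) *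
                ((ah j) ^ (1/2:ℝ) * (bh j) ^ (1/2:ℝ)) := mul_le_mul' (hαhb j) (hαhb j)
            _ = ((ah j) ^ (1/2:ℝ) * (ah j) ^ (1/2:ℝ)) *
                ((bh j) ^ (1/2:ℝ) * (bh j) ^ (1/2:ℝ)) := by ring
            _ = ah j * bh j := by rw [ennreal_half_mul, ennreal_half_mul]
      _ ≤ sah * sbh := tsum_mul_le _ _
  have hα2v : (∑' k : ℤ, αv k * αv k) ≤ sav * sbv := by
    calc (∑' k : ℤ, αv k * αv k)
        ≤ ∑' k : ℤ, av k * bv k := by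
          refine Summable.tsum_le_tsum (fun k => ?_) ENNReal.summable ENNReal.summable
          calc αv k * αv k ≤ ((av k) ^ (1/2:ℝ) * (bv k) ^ (1/2:ℝ)) *
                ((av k) ^ (1/2:ℝ) * (bv k) ^ (1/2:ℝ)) := mul_le_mul' (hαvb k) (hαvb k)
            _ = ((av k) ^ (1/2:ℝ) * (av k) ^ (1/2:ℝ)) *
                ((bv k) ^ (1/2:ℝ) * (bv k) ^ (1/2:ℝ)) := by ring
            _ = av k * bv k := by rw [ennreal_half_mul, ennreal_half_mul]
      _ ≤ sav * sbv := tsum_mul_le _ _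
  have hAb : A ≤ sah ^ (1/2:ℝ) * sbh ^ (1/2:ℝ) := by
    calc A ≤ ∑' j : ℤ, (ah j) ^ (1/2:ℝ) * (bh j) ^ (1/2:ℝ) :=
        Summable.tsum_le_tsum hαhb ENNReal.summable ENNReal.summable
      _ ≤ sah ^ (1/2:ℝ) * sbh ^ (1/2:ℝ) := tsum_cs _ _
  have hBb : B ≤ sav ^ (1/2:ℝ) * sbv ^ (1/2:ℝ) := by
    calc B ≤ ∑' k : ℤ, (av k) ^ (1/2:ℝ) * (bv k) ^ (1/2:ℝ) :=
        Summable.tsum_le_tsum hαvb ENNReal.summable ENNReal.summable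
      _ ≤ sav ^ (1/2:ℝ) * sbv ^ (1/2:ℝ) := tsum_cs _ _
  -- AM-GM for the cross term
  have hcross : 2 * (A * B) ≤ sah * sbv + sav * sbh := by
    have h1 : A * B ≤ (sah ^ (1/2:ℝ) * sbv ^ (1/2:ℝ)) * (sav ^ (1/2:ℝ) * sbh ^ (1/2:ℝ)) := by
      calc A * B ≤ (sah ^ (1/2:ℝ) * sbh ^ (1/2:ℝ)) * (sav ^ (1/2:ℝ) * sbv ^ (1/2:ℝ)) :=
          mul_le_mul' hAb hBb
        _ = (sah ^ (1/2:ℝ) * sbv ^ (1/2:ℝ)) * (sav ^ (1/2:ℝ) * sbh ^ (1/2:ℝ)) := by ring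
    calc 2 * (A * B) ≤ 2 * ((sah ^ (1/2:ℝ) * sbv ^ (1/2:ℝ)) *
          (sav ^ (1/2:ℝ) * sbh ^ (1/2:ℝ))) := mul_le_mul_right h1 2
      _ ≤ (sah ^ (1/2:ℝ) * sbv ^ (1/2:ℝ)) * (sah ^ (1/2:ℝ) * sbv ^ (1/2:ℝ)) +
          (sav ^ (1/2:ℝ) * sbh ^ (1/2:ℝ)) * (sav ^ (1/2:ℝ) * sbh ^ (1/2:ℝ)) :=
          ennreal_amgm _ _
      _ = sah * sbv + sav * sbh := by
          rw [show (sah ^ (1/2:ℝ) * sbv ^ (1/2:ℝ)) * (sah ^ (1/2:ℝ) * sbv ^ (1/2:ℝ)) =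
            (sah ^ (1/2:ℝ) * sah ^ (1/2:ℝ)) * (sbv ^ (1/2:ℝ) * sbv ^ (1/2:ℝ)) by ring,
            show (sav ^ (1/2:ℝ) * sbh ^ (1/2:ℝ)) * (sav ^ (1/2:ℝ) * sbh ^ (1/2:ℝ)) =
            (sav ^ (1/2:ℝ) * sav ^ (1/2:ℝ)) * (sbh ^ (1/2:ℝ) * sbh ^ (1/2:ℝ)) by ring,
            ennreal_half_mul, ennreal_half_mul, ennreal_half_mul, ennreal_half_mul]
  -- total
  set X := gridLpPow (p + 2) u.h u.w with hX
  set Y := gridLpPow p u.h u.w with hY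
  set Z := gridLpPow 2 u.hd u.wd with hZ
  have hZsplit : Z = sbh + sbv := rfl
  have hYsplit : Y = sah + sav := rfl
  have hmain : 4 * X ≤ (cq * cq) * (Y * Z) := by
    have hXsplit : 4 * X = (∑' j : ℤ, 4 * ∫⁻ t, (‖u.h j t‖₊ : ℝ≥0∞) ^ (p + 2)) +
        (∑' k : ℤ, 4 * ∫⁻ t, (‖u.w k t‖₊ : ℝ≥0∞) ^ (p + 2)) := by
      rw [hX]
      show 4 * ((∑' j : ℤ, ∫⁻ t, (‖u.h j t‖₊ : ℝ≥0∞) ^ (p + 2)) +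
          (∑' k : ℤ, ∫⁻ t, (‖u.w k t‖₊ : ℝ≥0∞) ^ (p + 2))) = _
      rw [mul_add, ← ENNReal.tsum_mul_left, ← ENNReal.tsum_mul_left]
    rw [hXsplit]
    have hsumh : (∑' j : ℤ, 4 * ∫⁻ t, (‖u.h j t‖₊ : ℝ≥0∞) ^ (p + 2)) ≤
        (cq * cq) * (A * B + sah * sbh) := by
      calc (∑' j : ℤ, 4 * ∫⁻ t, (‖u.h j t‖₊ : ℝ≥0∞) ^ (p + 2))
          ≤ ∑' j : ℤ, (cq * αh j) * (cq * (B + αh j)) :=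
            Summable.tsum_le_tsum hlineh ENNReal.summable ENNReal.summable
        _ = (cq * cq) * ∑' j : ℤ, (αh j * B + αh j * αh j) := by
            rw [← ENNReal.tsum_mul_left]
            refine tsum_congr fun j => ?_
            ring
        _ = (cq * cq) * ((∑' j : ℤ, αh j * B) + ∑' j : ℤ, αh j * αh j) := by
            rw [ENNReal.tsum_add]
        _ = (cq * cq) * (A * B + ∑' j : ℤ, αh j * αh j) := by
            rw [ENNReal.tsum_mul_right]
        _ ≤ (cq * cq) * (A * B + sah * sbh) := by
            exact mul_le_mul_right (add_le_add le_rfl hα2h) _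
    have hsumv : (∑' k : ℤ, 4 * ∫⁻ t, (‖u.w k t‖₊ : ℝ≥0∞) ^ (p + 2)) ≤
        (cq * cq) * (A * B + sav * sbv) := by
      calc (∑' k : ℤ, 4 * ∫⁻ t, (‖u.w k t‖₊ : ℝ≥0∞) ^ (p + 2))
          ≤ ∑' k : ℤ, (cq * αv k) * (cq * (A + αv k)) :=
            Summable.tsum_le_tsum hlinev ENNReal.summable ENNReal.summable
        _ = (cq * cq) * ∑' k : ℤ, (αv k * A + αv k * αv k) := by
            rw [← ENNReal.tsum_mul_left]
            refine tsum_congr fun k => ?_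
            ring
        _ = (cq * cq) * ((∑' k : ℤ, αv k * A) + ∑' k : ℤ, αv k * αv k) := by
            rw [ENNReal.tsum_add]
        _ = (cq * cq) * (B * A + ∑' k : ℤ, αv k * αv k) := by
            rw [ENNReal.tsum_mul_right]
        _ ≤ (cq * cq) * (A * B + sav * sbv) := by
            rw [mul_comm B A]
            exact mul_le_mul_right (add_le_add le_rfl hα2v) _
    calc (∑' j : ℤ, 4 * ∫⁻ t, (‖u.h j t‖₊ : ℝ≥0∞) ^ (p + 2)) +
        (∑' k : ℤ, 4 * ∫⁻ t, (‖u.w k t‖₊ : ℝ≥0∞) ^ (p + 2))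
        ≤ (cq * cq) * (A * B + sah * sbh) + (cq * cq) * (A * B + sav * sbv) :=
          add_le_add hsumh hsumv
      _ = (cq * cq) * (2 * (A * B) + (sah * sbh + sav * sbv)) := by ring
      _ ≤ (cq * cq) * ((sah * sbv + sav * sbh) + (sah * sbh + sav * sbv)) :=
          mul_le_mul_right (add_le_add_left hcross _) _
      _ = (cq * cq) * ((sah + sav) * (sbh + sbv)) := by ring
      _ = (cq * cq) * (Y * Z) := by rw [hYsplit, hZsplit]
  -- constant manipulation
  set c4 : ℝ≥0∞ := ENNReal.ofReal ((p + 2) / 4) with hc4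
  have hcq4 : cq = 2 * c4 := by
    rw [hcq, hc4, hqdef]
    rw [show p / 2 + 1 = 2 * ((p + 2) / 4) by ring]
    rw [ENNReal.ofReal_mul (by norm_num)]
    norm_num
  have hXfin : X ≤ (c4 * c4) * (Y * Z) := by
    have h4 : 4 * X ≤ 4 * ((c4 * c4) * (Y * Z)) := by
      refine hmain.trans (le_of_eq ?_)
      rw [hcq4]; ring
    exact (ENNReal.mul_le_mul_iff_right (by norm_num) (by norm_num)).1 h4
  -- take square roots
  have hsqrt : X ^ (1/2:ℝ) ≤ c4 * (Y ^ (1/2:ℝ) * Z ^ (1/2:ℝ)) := by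
    calc X ^ (1/2:ℝ) ≤ ((c4 * c4) * (Y * Z)) ^ (1/2:ℝ) :=
        ENNReal.rpow_le_rpow hXfin (by norm_num)
      _ = (c4 * c4) ^ (1/2:ℝ) * (Y * Z) ^ (1/2:ℝ) :=
        ENNReal.mul_rpow_of_nonneg _ _ (by norm_num)
      _ = c4 * (Y ^ (1/2:ℝ) * Z ^ (1/2:ℝ)) := by
        rw [ENNReal.mul_rpow_of_nonneg _ _ (by norm_num : (0:ℝ) ≤ 1/2),
          ENNReal.mul_rpow_of_nonneg _ _ (by norm_num : (0:ℝ) ≤ 1/2),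
          ennreal_half_mul]
  -- unfold norms
  have hp2 : p + 2 ≠ 0 := by linarith
  have hpne : p ≠ 0 := by linarith
  have hLHS : u.lpNorm (p + 2) ^ (1 + p / 2) = X ^ (1/2:ℝ) := by
    rw [GridFunc.lpNorm, ← hX, ← ENNReal.rpow_mul]
    congr 1
    field_simp
    ring
  have hRHS1 : u.lpNorm p ^ (p / 2) = Y ^ (1/2:ℝ) := by
    rw [GridFunc.lpNorm, ← hY, ← ENNReal.rpow_mul]
    congr 1
    field_simp
  have hRHS2 : u.derivLpNorm 2 = Z ^ (1/2:ℝ) := by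
    rw [GridFunc.derivLpNorm, ← hZ]
  rw [hLHS, hRHS1, hRHS2, mul_assoc]
  exact hsqrt

end
end

section
/- Critical Gagliardo–Nirenberg inequality on the grid: for every real p ∈ [4,6] there exists a constant K_p > 0, depending only on p, such that for every u ∈ H¹(𝒢) one has ‖u‖_{L^p(𝒢)}^p ≤ K_p ‖u‖_{L²(𝒢)}^{p−2} · ‖u'‖_{L²(𝒢)}². -/
/- Formalization of NLS ground states on the two-dimensional grid 𝒢
   (the planar metric graph with vertex set ℤ×ℤ and unit edges).

   A function `u` on 𝒢 is encoded by the family `h j` of its restrictions to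
   the horizontal lines `H j` and the family `w k` of its restrictions to the
   vertical lines `V k`, subject to the vertex-compatibility conditions
   `h j k = w k j`.  The (weak) derivative of `u` along each line is carried
   as additional data `hd`, `wd`, tied to `h`, `w` by the fundamental theorem
   of calculus in the membership predicates below. -/

open MeasureTheory Filter Topology
open scoped ENNReal NNReal

namespace GridGN
open Set


lemma rpow_two' (x : ℝ≥0∞) : x ^ (2:ℝ) = x * x := by
  rw [show (2:ℝ) = ((2:ℕ):ℝ) by norm_num, ENNReal.rpow_natCast, sq]

lemma rpow_four (x : ℝ≥0∞) : x ^ (4:ℝ) = x ^ (2:ℝ) * x ^ (2:ℝ) := by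
  rw [show (4:ℝ) = ((4:ℕ):ℝ) by norm_num, show (2:ℝ) = ((2:ℕ):ℝ) by norm_num,
    ENNReal.rpow_natCast, ENNReal.rpow_natCast]
  ring

lemma rpow_six (x : ℝ≥0∞) : x ^ (6:ℝ) = x ^ (2:ℝ) * x ^ (2:ℝ) * x ^ (2:ℝ) := by
  rw [show (6:ℝ) = ((6:ℕ):ℝ) by norm_num, show (2:ℝ) = ((2:ℕ):ℝ) by norm_num,
    ENNReal.rpow_natCast, ENNReal.rpow_natCast]
  ring

lemma amgm (s t : ℝ≥0∞) : s * t + t * s ≤ s * s + t * t := by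
  rcases eq_or_ne s ⊤ with hs | hs
  · subst hs
    rcases eq_or_ne t 0 with ht | ht
    · simp [ht]
    · have : (⊤ : ℝ≥0∞) * ⊤ = ⊤ := by simp
      rw [this]
      exact le_trans le_top (le_add_right le_rfl)
  rcases eq_or_ne t ⊤ with ht | ht
  · subst ht
    have : (⊤ : ℝ≥0∞) * ⊤ = ⊤ := by simp
    rw [this]
    exact le_trans le_top (le_add_left le_rfl)
  lift s to ℝ≥0 using hs
  lift t to ℝ≥0 using ht
  rw [← ENNReal.coe_mul, ← ENNReal.coe_mul, ← ENNReal.coe_mul, ← ENNReal.coe_mul,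
    ← ENNReal.coe_add, ← ENNReal.coe_add, ENNReal.coe_le_coe, ← NNReal.coe_le_coe]
  push_cast
  nlinarith [sq_nonneg ((s:ℝ) - (t:ℝ))]

lemma sq_add_le (s t : ℝ≥0∞) : (s + t) ^ (2:ℝ) ≤ 2 * s ^ (2:ℝ) + 2 * t ^ (2:ℝ) := by
  rw [rpow_two', rpow_two', rpow_two']
  calc (s + t) * (s + t) = s * s + t * t + (s * t + t * s) := by ring
    _ ≤ s * s + t * t + (s * s + t * t) := add_le_add_right (amgm s t) _
    _ = 2 * (s * s) + 2 * (t * t) := by ring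

lemma lintegral_sq (μ : Measure ℝ) {F : ℝ → ℝ≥0∞} (hF : AEMeasurable F μ) :
    (∫⁻ x, F x ∂μ) ^ (2:ℝ) ≤ (∫⁻ x, F x ^ (2:ℝ) ∂μ) * μ univ := by
  have hconj : Real.HolderConjugate 2 2 := .two_two
  have h := ENNReal.lintegral_mul_le_Lp_mul_Lq μ hconj hF (aemeasurable_const (b := (1:ℝ≥0∞)))
  simp only [Pi.mul_apply, mul_one, ENNReal.one_rpow, lintegral_const, one_mul] at h
  calc (∫⁻ x, F x ∂μ) ^ (2:ℝ)
      ≤ ((∫⁻ x, F x ^ (2:ℝ) ∂μ) ^ (1/2:ℝ) * (μ univ) ^ (1/2:ℝ)) ^ (2:ℝ) :=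
        ENNReal.rpow_le_rpow h (by norm_num)
    _ = (∫⁻ x, F x ^ (2:ℝ) ∂μ) * μ univ := by
        rw [ENNReal.mul_rpow_of_nonneg _ _ (by norm_num : (0:ℝ) ≤ 2),
          ← ENNReal.rpow_mul, ← ENNReal.rpow_mul]
        norm_num


lemma nnnorm_mono' {u v : ℝ} (h : |u| ≤ |v|) : (‖u‖₊ : ℝ≥0∞) ≤ (‖v‖₊ : ℝ≥0∞) := by
  rw [ENNReal.coe_le_coe, ← NNReal.coe_le_coe, coe_nnnorm, coe_nnnorm,
    Real.norm_eq_abs, Real.norm_eq_abs]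
  exact h

variable {f g : ℝ → ℝ}

lemma meas_en (hf : Continuous f) : Measurable fun t => (‖f t‖₊ : ℝ≥0∞) :=
  hf.measurable.nnnorm.coe_nnreal_ennreal

lemma meas_en_rpow (hf : Continuous f) (q : ℝ) :
    Measurable fun t => (‖f t‖₊ : ℝ≥0∞) ^ q :=
  (ENNReal.continuous_rpow_const.measurable).comp (meas_en hf)

lemma diff_bound (hg : LocallyIntegrable g volume)
    (hFTC : ∀ x : ℝ, (∫ t in (0:ℝ)..x, g t) = f x - f 0) {y x : ℝ} (hyx : y ≤ x) :
    (‖f x‖₊ : ℝ≥0∞) ≤ (‖f y‖₊ : ℝ≥0∞) + ∫⁻ t in Ioc y x, (‖g t‖₊ : ℝ≥0∞) := by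
  have hint : ∀ a b : ℝ, IntervalIntegrable g volume a b := fun a b =>
    (hg.integrableOn_isCompact isCompact_uIcc).intervalIntegrable
  have h1 : f x - f y = ∫ t in y..x, g t := by
    have h2 := intervalIntegral.integral_interval_sub_left (hint 0 x) (hint 0 y)
    rw [hFTC x, hFTC y] at h2
    linarith [h2]
  have h3 : (‖f x‖₊ : ℝ≥0∞) ≤ (‖f y‖₊ : ℝ≥0∞) + (‖f x - f y‖₊ : ℝ≥0∞) := by
    rw [← ENNReal.coe_add, ENNReal.coe_le_coe]
    have h4 := nnnorm_add_le (f y) (f x - f y)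
    simpa using h4
  refine h3.trans (add_le_add_right ?_ _)
  rw [h1, ← enorm_eq_nnnorm, Real.enorm_eq_ofReal_abs]
  have h4 : |∫ t in y..x, g t| ≤ ∫ t in y..x, |g t| :=
    intervalIntegral.abs_integral_le_integral_abs hyx
  have h5 : (∫ t in y..x, |g t|) = ∫ t in Ioc y x, |g t| :=
    intervalIntegral.integral_of_le hyx
  have h6 : IntegrableOn g (Ioc y x) volume := (hint y x).1
  calc ENNReal.ofReal |∫ t in y..x, g t|
      ≤ ENNReal.ofReal (∫ t in Ioc y x, |g t|) :=
        ENNReal.ofReal_le_ofReal (le_trans h4 (le_of_eq h5))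
    _ = ∫⁻ t in Ioc y x, (‖g t‖₊ : ℝ≥0∞) := by
        simp only [← Real.norm_eq_abs]
        exact ofReal_integral_norm_eq_lintegral_enorm h6

lemma sup_sq_le (hf : Continuous f) (hg : LocallyIntegrable g volume)
    (hFTC : ∀ x : ℝ, (∫ t in (0:ℝ)..x, g t) = f x - f 0) (x L : ℝ) (hL : 0 < L) :
    (‖f x‖₊ : ℝ≥0∞) ^ (2:ℝ) ≤
      2 * (∫⁻ t, (‖f t‖₊ : ℝ≥0∞) ^ (2:ℝ)) / ENNReal.ofReal L
        + 2 * ENNReal.ofReal L * (∫⁻ t, (‖g t‖₊ : ℝ≥0∞) ^ (2:ℝ)) := by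
  set a := ∫⁻ t, (‖f t‖₊ : ℝ≥0∞) ^ (2:ℝ) with ha
  set b := ∫⁻ t, (‖g t‖₊ : ℝ≥0∞) ^ (2:ℝ) with hb
  set ℓ := ENNReal.ofReal L with hℓ
  have hℓ0 : ℓ ≠ 0 := (ENNReal.ofReal_pos.mpr hL).ne'
  have hℓt : ℓ ≠ ⊤ := ENNReal.ofReal_ne_top
  have hne : (Icc (x - L) x).Nonempty := nonempty_Icc.mpr (by linarith)
  obtain ⟨y, hyI, hymin⟩ := isCompact_Icc.exists_isMinOn hne (hf.abs.continuousOn)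
  have hyx : y ≤ x := hyI.2
  have hfy : (‖f y‖₊ : ℝ≥0∞) ^ (2:ℝ) ≤ a / ℓ := by
    rw [ENNReal.le_div_iff_mul_le (Or.inl hℓ0) (Or.inl hℓt)]
    calc (‖f y‖₊ : ℝ≥0∞) ^ (2:ℝ) * ℓ
        = ∫⁻ _ in Icc (x - L) x, (‖f y‖₊ : ℝ≥0∞) ^ (2:ℝ) := by
          rw [setLIntegral_const, Real.volume_Icc]
          congr 2
          ring
          rfl
      _ ≤ ∫⁻ t in Icc (x - L) x, (‖f t‖₊ : ℝ≥0∞) ^ (2:ℝ) := by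
          refine setLIntegral_mono (meas_en_rpow hf 2) fun t ht => ?_
          exact ENNReal.rpow_le_rpow (nnnorm_mono' (isMinOn_iff.mp hymin t ht)) (by norm_num)
      _ ≤ a := setLIntegral_le_lintegral _ _
  have hd := diff_bound hg hFTC hyx
  have hIoc : (∫⁻ t in Ioc y x, (‖g t‖₊ : ℝ≥0∞)) ^ (2:ℝ) ≤ b * ℓ := by
    have hcs := lintegral_sq (volume.restrict (Ioc y x))
      (F := fun t => (‖g t‖₊ : ℝ≥0∞)) (hg.aestronglyMeasurable.enorm.restrict)
    rw [Measure.restrict_apply_univ] at hcs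
    refine hcs.trans (mul_le_mul' (setLIntegral_le_lintegral _ _) ?_)
    rw [Real.volume_Ioc]
    exact ENNReal.ofReal_le_ofReal (by linarith [hyI.1])
  calc (‖f x‖₊ : ℝ≥0∞) ^ (2:ℝ)
      ≤ ((‖f y‖₊ : ℝ≥0∞) + ∫⁻ t in Ioc y x, (‖g t‖₊ : ℝ≥0∞)) ^ (2:ℝ) :=
        ENNReal.rpow_le_rpow hd (by norm_num)
    _ ≤ 2 * (‖f y‖₊ : ℝ≥0∞) ^ (2:ℝ) + 2 * (∫⁻ t in Ioc y x, (‖g t‖₊ : ℝ≥0∞)) ^ (2:ℝ) :=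
        sq_add_le _ _
    _ ≤ 2 * (a / ℓ) + 2 * (b * ℓ) := by gcongr
    _ = 2 * a / ℓ + 2 * ℓ * b := by rw [mul_div_assoc]; ring_nf

lemma edge_sq_le (hg : LocallyIntegrable g volume)
    (hFTC : ∀ x : ℝ, (∫ t in (0:ℝ)..x, g t) = f x - f 0) (k : ℝ) {x : ℝ}
    (hx : x ∈ Ioc k (k + 1)) :
    (‖f x‖₊ : ℝ≥0∞) ^ (2:ℝ) ≤ 2 * (‖f k‖₊ : ℝ≥0∞) ^ (2:ℝ)
      + 2 * ∫⁻ t in Ioc k (k + 1), (‖g t‖₊ : ℝ≥0∞) ^ (2:ℝ) := by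
  have hd := diff_bound hg hFTC (le_of_lt hx.1)
  have h2 : (∫⁻ t in Ioc k x, (‖g t‖₊ : ℝ≥0∞)) ≤ ∫⁻ t in Ioc k (k + 1), (‖g t‖₊ : ℝ≥0∞) :=
    lintegral_mono_set (Ioc_subset_Ioc_right hx.2)
  have hv : volume (Ioc k (k + 1)) = 1 := by
    rw [Real.volume_Ioc]
    norm_num
  have hcs : (∫⁻ t in Ioc k (k + 1), (‖g t‖₊ : ℝ≥0∞)) ^ (2:ℝ)
      ≤ ∫⁻ t in Ioc k (k + 1), (‖g t‖₊ : ℝ≥0∞) ^ (2:ℝ) := by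
    have h3 := lintegral_sq (volume.restrict (Ioc k (k + 1)))
      (F := fun t => (‖g t‖₊ : ℝ≥0∞)) (hg.aestronglyMeasurable.enorm.restrict)
    rwa [Measure.restrict_apply_univ, hv, mul_one] at h3
  calc (‖f x‖₊ : ℝ≥0∞) ^ (2:ℝ)
      ≤ ((‖f k‖₊ : ℝ≥0∞) + ∫⁻ t in Ioc k x, (‖g t‖₊ : ℝ≥0∞)) ^ (2:ℝ) :=
        ENNReal.rpow_le_rpow hd (by norm_num)
    _ ≤ 2 * (‖f k‖₊ : ℝ≥0∞) ^ (2:ℝ) + 2 * (∫⁻ t in Ioc k x, (‖g t‖₊ : ℝ≥0∞)) ^ (2:ℝ) :=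
        sq_add_le _ _
    _ ≤ 2 * (‖f k‖₊ : ℝ≥0∞) ^ (2:ℝ) + 2 * ∫⁻ t in Ioc k (k + 1), (‖g t‖₊ : ℝ≥0∞) ^ (2:ℝ) := by
        gcongr
        exact hcs.trans' (ENNReal.rpow_le_rpow h2 (by norm_num))


lemma lintegral_eq_sum_edges (F : ℝ → ℝ≥0∞) :
    (∫⁻ x, F x) = ∑' k : ℤ, ∫⁻ x in Ioc (k:ℝ) ((k:ℝ)+1), F x := by
  conv_lhs => rw [← setLIntegral_univ]
  rw [← iUnion_Ioc_intCast ℝ, lintegral_iUnion (fun n => measurableSet_Ioc)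
    (pairwise_disjoint_Ioc_intCast ℝ)]

lemma line4 (hf : Continuous f) (hg : LocallyIntegrable g volume)
    (hFTC : ∀ x : ℝ, (∫ t in (0:ℝ)..x, g t) = f x - f 0)
    {m : ℝ≥0∞} (hm : ∀ x : ℝ, (‖f x‖₊ : ℝ≥0∞) ^ (2:ℝ) ≤ m)
    {n : ℤ → ℝ≥0∞} (hn : ∀ k : ℤ, (‖f (k:ℝ)‖₊ : ℝ≥0∞) ^ (2:ℝ) ≤ n k) :
    (∫⁻ x, (‖f x‖₊ : ℝ≥0∞) ^ (4:ℝ)) ≤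
      2 * m * (∑' k : ℤ, n k) + 2 * m * ∫⁻ x, (‖g x‖₊ : ℝ≥0∞) ^ (2:ℝ) := by
  rw [lintegral_eq_sum_edges]
  have hedge : ∀ k : ℤ, (∫⁻ x in Ioc (k:ℝ) ((k:ℝ)+1), (‖f x‖₊:ℝ≥0∞)^(4:ℝ))
      ≤ m * (2 * n k + 2 * ∫⁻ t in Ioc (k:ℝ) ((k:ℝ)+1), (‖g t‖₊:ℝ≥0∞)^(2:ℝ)) := by
    intro k
    have hb : ∀ x ∈ Ioc (k:ℝ) ((k:ℝ)+1), (‖f x‖₊:ℝ≥0∞)^(4:ℝ)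
        ≤ m * (2 * n k + 2 * ∫⁻ t in Ioc (k:ℝ) ((k:ℝ)+1), (‖g t‖₊:ℝ≥0∞)^(2:ℝ)) := by
      intro x hx
      rw [rpow_four]
      refine mul_le_mul' (hm x) ?_
      refine (edge_sq_le hg hFTC (k:ℝ) hx).trans ?_
      gcongr
      exact hn k
    calc (∫⁻ x in Ioc (k:ℝ) ((k:ℝ)+1), (‖f x‖₊:ℝ≥0∞)^(4:ℝ))
        ≤ ∫⁻ _ in Ioc (k:ℝ) ((k:ℝ)+1),
            m * (2 * n k + 2 * ∫⁻ t in Ioc (k:ℝ) ((k:ℝ)+1), (‖g t‖₊:ℝ≥0∞)^(2:ℝ)) :=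
          setLIntegral_mono measurable_const hb
      _ = m * (2 * n k + 2 * ∫⁻ t in Ioc (k:ℝ) ((k:ℝ)+1), (‖g t‖₊:ℝ≥0∞)^(2:ℝ)) := by
          rw [setLIntegral_const, Real.volume_Ioc]
          norm_num
  refine (ENNReal.tsum_le_tsum hedge).trans (le_of_eq ?_)
  have hsum : (∑' k : ℤ, ∫⁻ t in Ioc (k:ℝ) ((k:ℝ)+1), (‖g t‖₊:ℝ≥0∞)^(2:ℝ))
      = ∫⁻ x, (‖g x‖₊:ℝ≥0∞)^(2:ℝ) :=
    (lintegral_eq_sum_edges fun t => (‖g t‖₊:ℝ≥0∞)^(2:ℝ)).symm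
  rw [ENNReal.tsum_mul_left, ENNReal.tsum_add, ENNReal.tsum_mul_left, ENNReal.tsum_mul_left,
    hsum]
  ring

lemma line_simple4 (hf : Continuous f) {m : ℝ≥0∞}
    (hm : ∀ x : ℝ, (‖f x‖₊ : ℝ≥0∞) ^ (2:ℝ) ≤ m) :
    (∫⁻ x, (‖f x‖₊ : ℝ≥0∞) ^ (4:ℝ)) ≤ m * ∫⁻ x, (‖f x‖₊ : ℝ≥0∞) ^ (2:ℝ) := by
  calc (∫⁻ x, (‖f x‖₊ : ℝ≥0∞) ^ (4:ℝ))
      ≤ ∫⁻ x, m * (‖f x‖₊ : ℝ≥0∞) ^ (2:ℝ) := by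
        refine lintegral_mono fun x => ?_
        rw [rpow_four]
        exact mul_le_mul' (hm x) le_rfl
    _ = m * ∫⁻ x, (‖f x‖₊ : ℝ≥0∞) ^ (2:ℝ) := lintegral_const_mul m (meas_en_rpow hf 2)

lemma line_simple6 (hf : Continuous f) {m : ℝ≥0∞}
    (hm : ∀ x : ℝ, (‖f x‖₊ : ℝ≥0∞) ^ (2:ℝ) ≤ m) :
    (∫⁻ x, (‖f x‖₊ : ℝ≥0∞) ^ (6:ℝ)) ≤ m * m * ∫⁻ x, (‖f x‖₊ : ℝ≥0∞) ^ (2:ℝ) := by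
  calc (∫⁻ x, (‖f x‖₊ : ℝ≥0∞) ^ (6:ℝ))
      ≤ ∫⁻ x, m * m * (‖f x‖₊ : ℝ≥0∞) ^ (2:ℝ) := by
        refine lintegral_mono fun x => ?_
        rw [rpow_six]
        exact mul_le_mul' (mul_le_mul' (hm x) (hm x)) le_rfl
    _ = m * m * ∫⁻ x, (‖f x‖₊ : ℝ≥0∞) ^ (2:ℝ) :=
        lintegral_const_mul _ (meas_en_rpow hf 2)

lemma rpow_interp {θ : ℝ≥0∞} (hθ0 : θ ≠ 0) (hθt : θ ≠ ⊤) {p : ℝ} (hp4 : 4 ≤ p) (hp6 : p ≤ 6)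
    (t : ℝ≥0) : (t:ℝ≥0∞) ^ p ≤ θ ^ (p-4) * (t:ℝ≥0∞) ^ (4:ℝ) + θ ^ (p-6) * (t:ℝ≥0∞) ^ (6:ℝ) := by
  rcases eq_or_ne t 0 with ht | ht
  · subst ht
    simp [ENNReal.zero_rpow_of_pos (by linarith : (0:ℝ) < p)]
  have ht0 : (t:ℝ≥0∞) ≠ 0 := by exact_mod_cast ht
  have htt : (t:ℝ≥0∞) ≠ ⊤ := ENNReal.coe_ne_top
  rcases le_total (t:ℝ≥0∞) θ with h | h
  · have h1 : (t:ℝ≥0∞) ^ p = (t:ℝ≥0∞) ^ (4:ℝ) * (t:ℝ≥0∞) ^ (p-4) := by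
      rw [← ENNReal.rpow_add _ _ ht0 htt]
      norm_num
    rw [h1]
    refine le_trans ?_ le_self_add
    rw [mul_comm (θ ^ (p-4)) _]
    exact mul_le_mul' le_rfl (ENNReal.rpow_le_rpow h (by linarith))
  · have h6 : (t:ℝ≥0∞) ^ (p-6) ≤ θ ^ (p-6) := by
      rw [show p - 6 = -(6-p) by ring, ENNReal.rpow_neg, ENNReal.rpow_neg]
      exact ENNReal.inv_le_inv.mpr (ENNReal.rpow_le_rpow h (by linarith))
    have h1 : (t:ℝ≥0∞) ^ p = (t:ℝ≥0∞) ^ (6:ℝ) * (t:ℝ≥0∞) ^ (p-6) := by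
      rw [← ENNReal.rpow_add _ _ ht0 htt]
      norm_num
    rw [h1]
    refine le_trans ?_ le_add_self
    rw [mul_comm (θ ^ (p-6)) _]
    exact mul_le_mul' le_rfl h6

lemma line_interp (hf : Continuous f) {θ : ℝ≥0∞} (hθ0 : θ ≠ 0) (hθt : θ ≠ ⊤)
    {p : ℝ} (hp4 : 4 ≤ p) (hp6 : p ≤ 6) :
    (∫⁻ x, (‖f x‖₊ : ℝ≥0∞) ^ p) ≤
      θ ^ (p-4) * (∫⁻ x, (‖f x‖₊ : ℝ≥0∞) ^ (4:ℝ))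
        + θ ^ (p-6) * ∫⁻ x, (‖f x‖₊ : ℝ≥0∞) ^ (6:ℝ) := by
  calc (∫⁻ x, (‖f x‖₊ : ℝ≥0∞) ^ p)
      ≤ ∫⁻ x, (θ ^ (p-4) * (‖f x‖₊ : ℝ≥0∞) ^ (4:ℝ) + θ ^ (p-6) * (‖f x‖₊ : ℝ≥0∞) ^ (6:ℝ)) :=
        lintegral_mono fun x => rpow_interp hθ0 hθt hp4 hp6 _
    _ = _ := by
        rw [lintegral_add_left ((meas_en_rpow hf 4).const_mul _),
          lintegral_const_mul _ (meas_en_rpow hf 4), lintegral_const_mul _ (meas_en_rpow hf 6)]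

lemma ae_zero_of_lint_sq_zero (hf : AEMeasurable f volume)
    (h : (∫⁻ t, (‖f t‖₊ : ℝ≥0∞) ^ (2:ℝ)) = 0) : ∀ᵐ t, f t = 0 := by
  have hm : AEMeasurable (fun t => (‖f t‖₊ : ℝ≥0∞) ^ (2:ℝ)) volume :=
    (ENNReal.continuous_rpow_const.measurable).comp_aemeasurable hf.enorm
  have h2 := (lintegral_eq_zero_iff' hm).mp h
  filter_upwards [h2] with t ht
  have ht2 : (‖f t‖₊ : ℝ≥0∞) ^ (2:ℝ) = 0 := ht
  rw [ENNReal.rpow_eq_zero_iff] at ht2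
  rcases ht2 with ⟨h0, _⟩ | ⟨htop, _⟩
  · have : ‖f t‖₊ = 0 := by exact_mod_cast h0
    simpa using this
  · exact absurd htop ENNReal.coe_ne_top

lemma lint_rpow_eq_zero {q : ℝ} (hq : 0 < q) (h : ∀ᵐ t : ℝ, f t = 0) :
    (∫⁻ t, (‖f t‖₊ : ℝ≥0∞) ^ q) = 0 := by
  have h2 : (fun t : ℝ => (‖f t‖₊ : ℝ≥0∞) ^ q) =ᵐ[volume] (fun _ => 0) := by
    filter_upwards [h] with t ht
    simp [ht, ENNReal.zero_rpow_of_pos hq]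
  rw [lintegral_congr_ae h2, lintegral_zero]


lemma grid4_half (f g F : ℤ → ℝ → ℝ)
    (hcf : ∀ j, Continuous (f j)) (hlg : ∀ j, LocallyIntegrable (g j) volume)
    (hftc : ∀ (j : ℤ) (x : ℝ), (∫ t in (0:ℝ)..x, g j t) = f j x - f j 0)
    (hcompat : ∀ j k : ℤ, f j (k:ℝ) = F k (j:ℝ))
    (m n : ℤ → ℝ≥0∞)
    (hm : ∀ (j : ℤ) (x : ℝ), (‖f j x‖₊:ℝ≥0∞)^(2:ℝ) ≤ m j)
    (hn : ∀ (k : ℤ) (y : ℝ), (‖F k y‖₊:ℝ≥0∞)^(2:ℝ) ≤ n k)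
    (M : ℝ≥0∞) (hmM : ∀ j, m j ≤ M) :
    (∑' j : ℤ, ∫⁻ x, (‖f j x‖₊:ℝ≥0∞)^(4:ℝ)) ≤
      2 * (∑' j : ℤ, m j) * (∑' k : ℤ, n k)
        + 2 * M * (∑' j : ℤ, ∫⁻ x, (‖g j x‖₊:ℝ≥0∞)^(2:ℝ)) := by
  have hline : ∀ j : ℤ, (∫⁻ x, (‖f j x‖₊:ℝ≥0∞)^(4:ℝ)) ≤
      2 * (∑' k : ℤ, n k) * m j + 2 * M * ∫⁻ x, (‖g j x‖₊:ℝ≥0∞)^(2:ℝ) := by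
    intro j
    have h1 := line4 (hcf j) (hlg j) (hftc j) (hm j)
      (n := n) (fun k => by rw [hcompat j k]; exact hn k (j:ℝ))
    refine h1.trans ?_
    have e1 : 2 * m j * (∑' k : ℤ, n k) = 2 * (∑' k : ℤ, n k) * m j := by ring
    rw [e1]
    gcongr
    exact hmM j
  refine (ENNReal.tsum_le_tsum hline).trans (le_of_eq ?_)
  rw [ENNReal.tsum_add, ENNReal.tsum_mul_left, ENNReal.tsum_mul_left]
  ring

lemma grid4_simple_half (f : ℤ → ℝ → ℝ) (hcf : ∀ j, Continuous (f j)) (m : ℤ → ℝ≥0∞)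
    (hm : ∀ (j : ℤ) (x : ℝ), (‖f j x‖₊:ℝ≥0∞)^(2:ℝ) ≤ m j) (M : ℝ≥0∞) (hmM : ∀ j, m j ≤ M) :
    (∑' j : ℤ, ∫⁻ x, (‖f j x‖₊:ℝ≥0∞)^(4:ℝ)) ≤
      M * (∑' j : ℤ, ∫⁻ x, (‖f j x‖₊:ℝ≥0∞)^(2:ℝ)) := by
  have hline : ∀ j : ℤ, (∫⁻ x, (‖f j x‖₊:ℝ≥0∞)^(4:ℝ)) ≤
      M * ∫⁻ x, (‖f j x‖₊:ℝ≥0∞)^(2:ℝ) := fun j =>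
    line_simple4 (hcf j) (fun x => (hm j x).trans (hmM j))
  exact (ENNReal.tsum_le_tsum hline).trans (le_of_eq ENNReal.tsum_mul_left)

lemma grid6_simple_half (f : ℤ → ℝ → ℝ) (hcf : ∀ j, Continuous (f j)) (m : ℤ → ℝ≥0∞)
    (hm : ∀ (j : ℤ) (x : ℝ), (‖f j x‖₊:ℝ≥0∞)^(2:ℝ) ≤ m j) (M : ℝ≥0∞) (hmM : ∀ j, m j ≤ M) :
    (∑' j : ℤ, ∫⁻ x, (‖f j x‖₊:ℝ≥0∞)^(6:ℝ)) ≤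
      M * M * (∑' j : ℤ, ∫⁻ x, (‖f j x‖₊:ℝ≥0∞)^(2:ℝ)) := by
  have hline : ∀ j : ℤ, (∫⁻ x, (‖f j x‖₊:ℝ≥0∞)^(6:ℝ)) ≤
      M * M * ∫⁻ x, (‖f j x‖₊:ℝ≥0∞)^(2:ℝ) := fun j =>
    line_simple6 (hcf j) (fun x => (hm j x).trans (hmM j))
  exact (ENNReal.tsum_le_tsum hline).trans (le_of_eq ENNReal.tsum_mul_left)

lemma grid_interp_half (f : ℤ → ℝ → ℝ) (hcf : ∀ j, Continuous (f j))
    {θ : ℝ≥0∞} (hθ0 : θ ≠ 0) (hθt : θ ≠ ⊤) {p : ℝ} (hp4 : 4 ≤ p) (hp6 : p ≤ 6) :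
    (∑' j : ℤ, ∫⁻ x, (‖f j x‖₊:ℝ≥0∞) ^ p) ≤
      θ ^ (p-4) * (∑' j : ℤ, ∫⁻ x, (‖f j x‖₊:ℝ≥0∞) ^ (4:ℝ))
        + θ ^ (p-6) * (∑' j : ℤ, ∫⁻ x, (‖f j x‖₊:ℝ≥0∞) ^ (6:ℝ)) := by
  have hline := fun j : ℤ => line_interp (hcf j) hθ0 hθt hp4 hp6
  refine (ENNReal.tsum_le_tsum hline).trans (le_of_eq ?_)
  rw [ENNReal.tsum_add, ENNReal.tsum_mul_left, ENNReal.tsum_mul_left]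


lemma main_bound (h w hd wd : ℤ → ℝ → ℝ)
    (hch : ∀ j, Continuous (h j)) (hcw : ∀ k, Continuous (w k))
    (hlh : ∀ j, LocallyIntegrable (hd j) volume) (hlw : ∀ k, LocallyIntegrable (wd k) volume)
    (hfth : ∀ (j : ℤ) (x : ℝ), (∫ t in (0:ℝ)..x, hd j t) = h j x - h j 0)
    (hftw : ∀ (k : ℤ) (y : ℝ), (∫ t in (0:ℝ)..y, wd k t) = w k y - w k 0)
    (hcompat : ∀ j k : ℤ, h j (k:ℝ) = w k (j:ℝ))
    {p : ℝ} (hp4 : 4 ≤ p) (hp6 : p ≤ 6)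
    (hA0 : ((∑' j : ℤ, ∫⁻ x : ℝ, (‖h j x‖₊:ℝ≥0∞)^(2:ℝ))
        + ∑' k : ℤ, ∫⁻ y : ℝ, (‖w k y‖₊:ℝ≥0∞)^(2:ℝ)) ≠ 0)
    (hAt : ((∑' j : ℤ, ∫⁻ x : ℝ, (‖h j x‖₊:ℝ≥0∞)^(2:ℝ))
        + ∑' k : ℤ, ∫⁻ y : ℝ, (‖w k y‖₊:ℝ≥0∞)^(2:ℝ)) ≠ ⊤)
    (hB0 : ((∑' j : ℤ, ∫⁻ x : ℝ, (‖hd j x‖₊:ℝ≥0∞)^(2:ℝ))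
        + ∑' k : ℤ, ∫⁻ y : ℝ, (‖wd k y‖₊:ℝ≥0∞)^(2:ℝ)) ≠ 0)
    (hBt : ((∑' j : ℤ, ∫⁻ x : ℝ, (‖hd j x‖₊:ℝ≥0∞)^(2:ℝ))
        + ∑' k : ℤ, ∫⁻ y : ℝ, (‖wd k y‖₊:ℝ≥0∞)^(2:ℝ)) ≠ ⊤) :
    ((∑' j : ℤ, ∫⁻ x : ℝ, (‖h j x‖₊:ℝ≥0∞) ^ p)
        + ∑' k : ℤ, ∫⁻ y : ℝ, (‖w k y‖₊:ℝ≥0∞) ^ p) ≤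
      96 * (((∑' j : ℤ, ∫⁻ x : ℝ, (‖h j x‖₊:ℝ≥0∞)^(2:ℝ))
        + ∑' k : ℤ, ∫⁻ y : ℝ, (‖w k y‖₊:ℝ≥0∞)^(2:ℝ)) ^ ((p-2)/2))
        * ((∑' j : ℤ, ∫⁻ x : ℝ, (‖hd j x‖₊:ℝ≥0∞)^(2:ℝ))
        + ∑' k : ℤ, ∫⁻ y : ℝ, (‖wd k y‖₊:ℝ≥0∞)^(2:ℝ)) := by
  set Ah := ∑' j : ℤ, ∫⁻ x : ℝ, (‖h j x‖₊:ℝ≥0∞)^(2:ℝ) with hAh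
  set Aw := ∑' k : ℤ, ∫⁻ y : ℝ, (‖w k y‖₊:ℝ≥0∞)^(2:ℝ) with hAw
  set Bh := ∑' j : ℤ, ∫⁻ x : ℝ, (‖hd j x‖₊:ℝ≥0∞)^(2:ℝ) with hBh
  set Bw := ∑' k : ℤ, ∫⁻ y : ℝ, (‖wd k y‖₊:ℝ≥0∞)^(2:ℝ) with hBw
  set A := Ah + Aw with hA
  set B := Bh + Bw with hB
  -- the scale parameter
  have hABt : A / B ≠ ⊤ := (ENNReal.div_lt_top hAt hB0).ne
  have hAB0 : A / B ≠ 0 := by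
    simp only [ne_eq, ENNReal.div_eq_zero_iff, not_or]
    exact ⟨hA0, hBt⟩
  have hr0 : 0 < (A / B).toReal := ENNReal.toReal_pos hAB0 hABt
  set L := Real.sqrt (A / B).toReal with hLdef
  have hL : 0 < L := Real.sqrt_pos.mpr hr0
  set l := ENNReal.ofReal L with hldef
  have hl0 : l ≠ 0 := (ENNReal.ofReal_pos.mpr hL).ne'
  have hlt : l ≠ ⊤ := ENNReal.ofReal_ne_top
  have hl2 : l * l = A / B := by
    rw [hldef, ← ENNReal.ofReal_mul hL.le, hLdef, Real.mul_self_sqrt hr0.le,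
      ENNReal.ofReal_toReal hABt]
  have hAeq : l * l * B = A := by
    rw [hl2]
    exact ENNReal.div_mul_cancel hB0 hBt
  -- per-line sup bounds
  set m : ℤ → ℝ≥0∞ := fun j =>
    2 * (∫⁻ x : ℝ, (‖h j x‖₊:ℝ≥0∞)^(2:ℝ)) / l + 2 * l * ∫⁻ x : ℝ, (‖hd j x‖₊:ℝ≥0∞)^(2:ℝ)
    with hmdef
  set n : ℤ → ℝ≥0∞ := fun k =>
    2 * (∫⁻ y : ℝ, (‖w k y‖₊:ℝ≥0∞)^(2:ℝ)) / l + 2 * l * ∫⁻ y : ℝ, (‖wd k y‖₊:ℝ≥0∞)^(2:ℝ)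
    with hndef
  have hm : ∀ (j : ℤ) (x : ℝ), (‖h j x‖₊:ℝ≥0∞)^(2:ℝ) ≤ m j := by
    intro j x
    simp only [hmdef, hldef]
    exact sup_sq_le (hch j) (hlh j) (hfth j) x L hL
  have hn : ∀ (k : ℤ) (y : ℝ), (‖w k y‖₊:ℝ≥0∞)^(2:ℝ) ≤ n k := by
    intro k y
    simp only [hndef, hldef]
    exact sup_sq_le (hcw k) (hlw k) (hftw k) y L hL
  set M := 2 * A / l + 2 * l * B with hMdef
  have haj : ∀ j : ℤ, (∫⁻ x : ℝ, (‖h j x‖₊:ℝ≥0∞)^(2:ℝ)) ≤ A :=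
    fun j => le_trans (ENNReal.le_tsum j) (hA ▸ le_self_add)
  have hck : ∀ k : ℤ, (∫⁻ y : ℝ, (‖w k y‖₊:ℝ≥0∞)^(2:ℝ)) ≤ A :=
    fun k => le_trans (ENNReal.le_tsum k) (hA ▸ le_add_self)
  have hbj : ∀ j : ℤ, (∫⁻ x : ℝ, (‖hd j x‖₊:ℝ≥0∞)^(2:ℝ)) ≤ B :=
    fun j => le_trans (ENNReal.le_tsum j) (hB ▸ le_self_add)
  have hdk : ∀ k : ℤ, (∫⁻ y : ℝ, (‖wd k y‖₊:ℝ≥0∞)^(2:ℝ)) ≤ B :=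
    fun k => le_trans (ENNReal.le_tsum k) (hB ▸ le_add_self)
  have hmM : ∀ j, m j ≤ M := by
    intro j
    simp only [hmdef, hMdef]
    gcongr
    · exact haj j
    · exact hbj j
  have hnM : ∀ k, n k ≤ M := by
    intro k
    simp only [hndef, hMdef]
    gcongr
    · exact hck k
    · exact hdk k
  have hSm : (∑' j : ℤ, m j) ≤ M := by
    have e : ∀ j : ℤ, m j = (2 / l) * (∫⁻ x : ℝ, (‖h j x‖₊:ℝ≥0∞)^(2:ℝ))
        + (2 * l) * ∫⁻ x : ℝ, (‖hd j x‖₊:ℝ≥0∞)^(2:ℝ) := by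
      intro j
      simp only [hmdef]
      rw [div_eq_mul_inv, div_eq_mul_inv]
      ring
    calc (∑' j : ℤ, m j)
        = (2 / l) * Ah + (2 * l) * Bh := by
          rw [tsum_congr e, ENNReal.tsum_add, ENNReal.tsum_mul_left, ENNReal.tsum_mul_left]
      _ ≤ (2 / l) * A + (2 * l) * B := by
          gcongr
          · exact hA ▸ le_self_add
          · exact hB ▸ le_self_add
      _ = M := by
          rw [hMdef, div_eq_mul_inv, div_eq_mul_inv]
          ring
  have hSn : (∑' k : ℤ, n k) ≤ M := by
    have e : ∀ k : ℤ, n k = (2 / l) * (∫⁻ y : ℝ, (‖w k y‖₊:ℝ≥0∞)^(2:ℝ))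
        + (2 * l) * ∫⁻ y : ℝ, (‖wd k y‖₊:ℝ≥0∞)^(2:ℝ) := by
      intro k
      simp only [hndef]
      rw [div_eq_mul_inv, div_eq_mul_inv]
      ring
    calc (∑' k : ℤ, n k)
        = (2 / l) * Aw + (2 * l) * Bw := by
          rw [tsum_congr e, ENNReal.tsum_add, ENNReal.tsum_mul_left, ENNReal.tsum_mul_left]
      _ ≤ (2 / l) * A + (2 * l) * B := by
          gcongr
          · exact hA ▸ le_add_self
          · exact hB ▸ le_add_self
      _ = M := by
          rw [hMdef, div_eq_mul_inv, div_eq_mul_inv]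
          ring
  have hMl : M = 4 * (l * B) := by
    have h1 : 2 * A / l = 2 * (l * B) := by
      rw [← hAeq, div_eq_mul_inv]
      calc 2 * (l * l * B) * l⁻¹ = (l * l⁻¹) * (2 * (l * B)) := by ring
        _ = 2 * (l * B) := by rw [ENNReal.mul_inv_cancel hl0 hlt, one_mul]
    rw [hMdef, h1]
    ring
  have hMM : M * M = 16 * (A * B) := by
    rw [hMl, ← hAeq]
    ring
  -- the L⁴ bound
  have H4 : (∑' j : ℤ, ∫⁻ x : ℝ, (‖h j x‖₊:ℝ≥0∞)^(4:ℝ))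
      + (∑' k : ℤ, ∫⁻ y : ℝ, (‖w k y‖₊:ℝ≥0∞)^(4:ℝ)) ≤ 80 * (A * B) := by
    rcases le_total A B with hcase | hcase
    · -- A ≤ B : use the simple one-dimensional bound
      have hr1 : (A / B).toReal ≤ 1 := by
        have h1 : A / B ≤ 1 := by
          rw [ENNReal.div_le_iff hB0 hBt, one_mul]
          exact hcase
        calc (A / B).toReal ≤ (1:ℝ≥0∞).toReal := ENNReal.toReal_mono (by simp) h1
          _ = 1 := by simp
      have hl1 : l ≤ 1 := by
        rw [hldef, ← ENNReal.ofReal_one]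
        refine ENNReal.ofReal_le_ofReal ?_
        rw [hLdef]
        calc Real.sqrt (A / B).toReal ≤ Real.sqrt 1 := Real.sqrt_le_sqrt hr1
          _ = 1 := Real.sqrt_one
      have h1 := grid4_simple_half h hch m hm M hmM
      have h2 := grid4_simple_half w hcw n hn M hnM
      calc (∑' j : ℤ, ∫⁻ x : ℝ, (‖h j x‖₊:ℝ≥0∞)^(4:ℝ))
          + (∑' k : ℤ, ∫⁻ y : ℝ, (‖w k y‖₊:ℝ≥0∞)^(4:ℝ))
          ≤ M * Ah + M * Aw := add_le_add h1 h2
        _ = M * A := by rw [hA]; ring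
        _ = 4 * (l * B) * A := by rw [hMl]
        _ ≤ 4 * (1 * B) * A := by gcongr
        _ = 4 * (A * B) := by ring
        _ ≤ 80 * (A * B) := by gcongr <;> norm_num
    · -- B ≤ A : use the two-dimensional bound
      have hl1 : (1:ℝ≥0∞) ≤ l := by
        have h1 : (1:ℝ≥0∞) ≤ A / B := by
          rw [ENNReal.le_div_iff_mul_le (Or.inl hB0) (Or.inl hBt), one_mul]
          exact hcase
        have hr1 : (1:ℝ) ≤ (A / B).toReal := by
          calc (1:ℝ) = (1:ℝ≥0∞).toReal := by simp
            _ ≤ (A / B).toReal := ENNReal.toReal_mono hABt h1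
        rw [hldef, ← ENNReal.ofReal_one]
        refine ENNReal.ofReal_le_ofReal ?_
        rw [hLdef]
        calc (1:ℝ) = Real.sqrt 1 := Real.sqrt_one.symm
          _ ≤ Real.sqrt (A / B).toReal := Real.sqrt_le_sqrt hr1
      have hlB : l * B ≤ A := by
        calc l * B = 1 * (l * B) := (one_mul _).symm
          _ ≤ l * (l * B) := mul_le_mul_left hl1 _
          _ = l * l * B := by ring
          _ = A := hAeq
      have h1 := grid4_half h hd w hch hlh hfth hcompat m n hm hn M hmM
      have h2 := grid4_half w wd h hcw hlw hftw (fun k j => (hcompat j k).symm) n m hn hm M hnM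
      calc (∑' j : ℤ, ∫⁻ x : ℝ, (‖h j x‖₊:ℝ≥0∞)^(4:ℝ))
          + (∑' k : ℤ, ∫⁻ y : ℝ, (‖w k y‖₊:ℝ≥0∞)^(4:ℝ))
          ≤ (2 * (∑' j : ℤ, m j) * (∑' k : ℤ, n k) + 2 * M * Bh)
            + (2 * (∑' k : ℤ, n k) * (∑' j : ℤ, m j) + 2 * M * Bw) := add_le_add h1 h2
        _ ≤ (2 * M * M + 2 * M * B) + (2 * M * M + 2 * M * B) := by
            gcongr <;> first
              | exact hSm
              | exact hSn
              | exact hB ▸ le_self_add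
              | exact hB ▸ le_add_self
        _ = 4 * (M * M) + 4 * (M * B) := by ring
        _ ≤ 4 * (16 * (A * B)) + 4 * (4 * (l * B) * B) := by
            rw [hMM, hMl]
        _ ≤ 4 * (16 * (A * B)) + 4 * (4 * A * B) := by
            gcongr
        _ = 80 * (A * B) := by ring
  -- the L⁶ bound
  have H6 : (∑' j : ℤ, ∫⁻ x : ℝ, (‖h j x‖₊:ℝ≥0∞)^(6:ℝ))
      + (∑' k : ℤ, ∫⁻ y : ℝ, (‖w k y‖₊:ℝ≥0∞)^(6:ℝ)) ≤ 16 * (A * A * B) := by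
    have h1 := grid6_simple_half h hch m hm M hmM
    have h2 := grid6_simple_half w hcw n hn M hnM
    calc (∑' j : ℤ, ∫⁻ x : ℝ, (‖h j x‖₊:ℝ≥0∞)^(6:ℝ))
        + (∑' k : ℤ, ∫⁻ y : ℝ, (‖w k y‖₊:ℝ≥0∞)^(6:ℝ))
        ≤ M * M * Ah + M * M * Aw := add_le_add h1 h2
      _ = M * M * A := by rw [hA]; ring
      _ = 16 * (A * B) * A := by rw [hMM]
      _ = 16 * (A * A * B) := by ring
  -- interpolation
  set θ := A ^ ((1:ℝ)/2) with hθdef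
  have hθ0 : θ ≠ 0 := by
    rw [hθdef]
    simp only [ne_eq, ENNReal.rpow_eq_zero_iff, not_or, not_and]
    constructor
    · intro hc
      exact absurd hc hA0
    · intro hc
      exact absurd hc hAt
  have hθt : θ ≠ ⊤ := by
    rw [hθdef]
    simp only [ne_eq, ENNReal.rpow_eq_top_iff, not_or, not_and]
    constructor
    · intro hc
      exact absurd hc hA0
    · intro hc
      exact absurd hc hAt
  have hih := grid_interp_half h hch hθ0 hθt hp4 hp6
  have hiw := grid_interp_half w hcw hθ0 hθt hp4 hp6
  calc ((∑' j : ℤ, ∫⁻ x : ℝ, (‖h j x‖₊:ℝ≥0∞) ^ p)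
      + ∑' k : ℤ, ∫⁻ y : ℝ, (‖w k y‖₊:ℝ≥0∞) ^ p)
      ≤ (θ ^ (p-4) * (∑' j : ℤ, ∫⁻ x : ℝ, (‖h j x‖₊:ℝ≥0∞)^(4:ℝ))
          + θ ^ (p-6) * (∑' j : ℤ, ∫⁻ x : ℝ, (‖h j x‖₊:ℝ≥0∞)^(6:ℝ)))
        + (θ ^ (p-4) * (∑' k : ℤ, ∫⁻ y : ℝ, (‖w k y‖₊:ℝ≥0∞)^(4:ℝ))
          + θ ^ (p-6) * (∑' k : ℤ, ∫⁻ y : ℝ, (‖w k y‖₊:ℝ≥0∞)^(6:ℝ))) := add_le_add hih hiw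
    _ = θ ^ (p-4) * ((∑' j : ℤ, ∫⁻ x : ℝ, (‖h j x‖₊:ℝ≥0∞)^(4:ℝ))
          + (∑' k : ℤ, ∫⁻ y : ℝ, (‖w k y‖₊:ℝ≥0∞)^(4:ℝ)))
        + θ ^ (p-6) * ((∑' j : ℤ, ∫⁻ x : ℝ, (‖h j x‖₊:ℝ≥0∞)^(6:ℝ))
          + (∑' k : ℤ, ∫⁻ y : ℝ, (‖w k y‖₊:ℝ≥0∞)^(6:ℝ))) := by ring
    _ ≤ θ ^ (p-4) * (80 * (A * B)) + θ ^ (p-6) * (16 * (A * A * B)) := by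
        gcongr
    _ = 80 * ((θ ^ (p-4) * A) * B) + 16 * ((θ ^ (p-6) * A * A) * B) := by ring
    _ = 96 * (A ^ ((p-2)/2) * B) := by
        have e4 : θ ^ (p-4) * A = A ^ ((p-2)/2) := by
          rw [hθdef, ← ENNReal.rpow_mul]
          nth_rewrite 2 [show A = A ^ (1:ℝ) by rw [ENNReal.rpow_one]]
          rw [← ENNReal.rpow_add _ _ hA0 hAt]
          congr 1
          ring
        have e6 : θ ^ (p-6) * A * A = A ^ ((p-2)/2) := by
          rw [hθdef, ← ENNReal.rpow_mul]
          nth_rewrite 2 [show A = A ^ (1:ℝ) by rw [ENNReal.rpow_one]]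
          nth_rewrite 3 [show A = A ^ (1:ℝ) by rw [ENNReal.rpow_one]]
          rw [← ENNReal.rpow_add _ _ hA0 hAt, ← ENNReal.rpow_add _ _ hA0 hAt]
          congr 1
          ring
        rw [e4, e6]
        ring
    _ = 96 * A ^ ((p-2)/2) * B := by ring

end GridGN

noncomputable section

/-- **Critical Gagliardo–Nirenberg inequality on the grid**: for every
`p ∈ [4,6]` there is a constant `K_p > 0`, depending only on `p`, such that
`‖u‖_{L^p(𝒢)}^p ≤ K_p ‖u‖_{L²(𝒢)}^{p−2} ‖u'‖_{L²(𝒢)}²` for all `u ∈ H¹(𝒢)`. -/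
theorem grid_gagliardo_nirenberg_critical (p : ℝ) (hp : p ∈ Set.Icc (4 : ℝ) 6) :
    ∃ K : ℝ≥0, 0 < K ∧ ∀ u : GridFunc, u.MemH1 →
      u.lpNorm p ^ p ≤ (K : ℝ≥0∞) * u.lpNorm 2 ^ (p - 2) * u.derivLpNorm 2 ^ (2 : ℝ) := by
  obtain ⟨hp4, hp6⟩ := hp
  have hppos : (0:ℝ) < p := by linarith
  refine ⟨96, by norm_num, ?_⟩
  intro u hu
  obtain ⟨hch, hcw, hlh, hlw, hfth, hftw, hAfin, hBfin⟩ := hu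
  have hLHS : u.lpNorm p ^ p = gridLpPow p u.h u.w := by
    simp only [GridFunc.lpNorm]
    rw [← ENNReal.rpow_mul, one_div_mul_cancel hppos.ne', ENNReal.rpow_one]
  have hR2 : u.lpNorm 2 ^ (p - 2) = gridLpPow 2 u.h u.w ^ ((p - 2) / 2) := by
    simp only [GridFunc.lpNorm]
    rw [← ENNReal.rpow_mul]
    congr 1
    ring
  have hR3 : u.derivLpNorm 2 ^ (2:ℝ) = gridLpPow 2 u.hd u.wd := by
    simp only [GridFunc.derivLpNorm]
    rw [← ENNReal.rpow_mul, show (1/2 : ℝ) * 2 = 1 by norm_num, ENNReal.rpow_one]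
  rw [hLHS, hR2, hR3]
  have hK : ((96 : ℝ≥0) : ℝ≥0∞) = (96 : ℝ≥0∞) := by norm_num
  rw [hK]
  have hzero : (∀ j : ℤ, ∀ᵐ x : ℝ, u.h j x = 0) → (∀ k : ℤ, ∀ᵐ y : ℝ, u.w k y = 0) →
      gridLpPow p u.h u.w ≤
        96 * gridLpPow 2 u.h u.w ^ ((p - 2) / 2) * gridLpPow 2 u.hd u.wd := by
    intro hh hw
    have h1 : gridLpPow p u.h u.w = 0 := by
      have e1 : ∀ j : ℤ, (∫⁻ x : ℝ, (‖u.h j x‖₊ : ℝ≥0∞) ^ p) = 0 :=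
        fun j => GridGN.lint_rpow_eq_zero hppos (hh j)
      have e2 : ∀ k : ℤ, (∫⁻ y : ℝ, (‖u.w k y‖₊ : ℝ≥0∞) ^ p) = 0 :=
        fun k => GridGN.lint_rpow_eq_zero hppos (hw k)
      simp only [gridLpPow, e1, e2, tsum_zero, add_zero]
    rw [h1]
    exact zero_le
  rcases eq_or_ne (gridLpPow 2 u.h u.w) 0 with hA0 | hA0
  · -- the function vanishes a.e. on every line
    have h2 := hA0
    simp only [gridLpPow] at h2
    rw [add_eq_zero] at h2
    refine hzero (fun j => ?_) (fun k => ?_)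
    · exact GridGN.ae_zero_of_lint_sq_zero ((hch j).measurable.aemeasurable)
        (ENNReal.tsum_eq_zero.mp h2.1 j)
    · exact GridGN.ae_zero_of_lint_sq_zero ((hcw k).measurable.aemeasurable)
        (ENNReal.tsum_eq_zero.mp h2.2 k)
  rcases eq_or_ne (gridLpPow 2 u.hd u.wd) 0 with hB0 | hB0
  · -- the derivative vanishes, so every line is constant, hence zero
    have h2 := hB0
    simp only [gridLpPow] at h2
    rw [add_eq_zero] at h2
    have hconsth : ∀ (j : ℤ) (x : ℝ), u.h j x = u.h j 0 := by
      intro j x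
      have hae : ∀ᵐ t : ℝ, u.hd j t = 0 :=
        GridGN.ae_zero_of_lint_sq_zero (hlh j).aestronglyMeasurable.aemeasurable
          (ENNReal.tsum_eq_zero.mp h2.1 j)
      have h3 : (∫ t in (0:ℝ)..x, u.hd j t) = ∫ t in (0:ℝ)..x, (0:ℝ) :=
        intervalIntegral.integral_congr_ae (by filter_upwards [hae] with t ht _; exact ht)
      rw [intervalIntegral.integral_zero] at h3
      have h4 := hfth j x
      rw [h3] at h4
      linarith
    have hconstw : ∀ (k : ℤ) (y : ℝ), u.w k y = u.w k 0 := by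
      intro k y
      have hae : ∀ᵐ t : ℝ, u.wd k t = 0 :=
        GridGN.ae_zero_of_lint_sq_zero (hlw k).aestronglyMeasurable.aemeasurable
          (ENNReal.tsum_eq_zero.mp h2.2 k)
      have h3 : (∫ t in (0:ℝ)..y, u.wd k t) = ∫ t in (0:ℝ)..y, (0:ℝ) :=
        intervalIntegral.integral_congr_ae (by filter_upwards [hae] with t ht _; exact ht)
      rw [intervalIntegral.integral_zero] at h3
      have h4 := hftw k y
      rw [h3] at h4
      linarith
    have hzh : ∀ j : ℤ, ∀ᵐ x : ℝ, u.h j x = 0 := by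
      intro j
      have hle : (∫⁻ x : ℝ, (‖u.h j x‖₊ : ℝ≥0∞) ^ (2:ℝ)) ≤ gridLpPow 2 u.h u.w := by
        simp only [gridLpPow]
        exact le_trans (ENNReal.le_tsum j) le_self_add
      have hfin : (∫⁻ x : ℝ, (‖u.h j x‖₊ : ℝ≥0∞) ^ (2:ℝ)) ≠ ⊤ := (lt_of_le_of_lt hle hAfin).ne
      have hc : (∫⁻ x : ℝ, (‖u.h j x‖₊ : ℝ≥0∞) ^ (2:ℝ))
          = (‖u.h j 0‖₊ : ℝ≥0∞) ^ (2:ℝ) * volume (Set.univ : Set ℝ) := by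
        calc (∫⁻ x : ℝ, (‖u.h j x‖₊ : ℝ≥0∞) ^ (2:ℝ))
            = ∫⁻ _ : ℝ, (‖u.h j 0‖₊ : ℝ≥0∞) ^ (2:ℝ) := by
              congr 1
              funext x
              rw [hconsth j x]
          _ = _ := lintegral_const _
      have hval : u.h j 0 = 0 := by
        by_contra hne
        have hnz : (‖u.h j 0‖₊ : ℝ≥0∞) ^ (2:ℝ) ≠ 0 := by
          simp [ENNReal.rpow_eq_zero_iff, hne]
        rw [hc, Real.volume_univ, ENNReal.mul_top hnz] at hfin
        exact hfin rfl
      exact Filter.Eventually.of_forall (fun x => by rw [hconsth j x, hval])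
    have hzw : ∀ k : ℤ, ∀ᵐ y : ℝ, u.w k y = 0 := by
      intro k
      have hle : (∫⁻ y : ℝ, (‖u.w k y‖₊ : ℝ≥0∞) ^ (2:ℝ)) ≤ gridLpPow 2 u.h u.w := by
        simp only [gridLpPow]
        exact le_trans (ENNReal.le_tsum k) le_add_self
      have hfin : (∫⁻ y : ℝ, (‖u.w k y‖₊ : ℝ≥0∞) ^ (2:ℝ)) ≠ ⊤ := (lt_of_le_of_lt hle hAfin).ne
      have hc : (∫⁻ y : ℝ, (‖u.w k y‖₊ : ℝ≥0∞) ^ (2:ℝ))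
          = (‖u.w k 0‖₊ : ℝ≥0∞) ^ (2:ℝ) * volume (Set.univ : Set ℝ) := by
        calc (∫⁻ y : ℝ, (‖u.w k y‖₊ : ℝ≥0∞) ^ (2:ℝ))
            = ∫⁻ _ : ℝ, (‖u.w k 0‖₊ : ℝ≥0∞) ^ (2:ℝ) := by
              congr 1
              funext y
              rw [hconstw k y]
          _ = _ := lintegral_const _
      have hval : u.w k 0 = 0 := by
        by_contra hne
        have hnz : (‖u.w k 0‖₊ : ℝ≥0∞) ^ (2:ℝ) ≠ 0 := by
          simp [ENNReal.rpow_eq_zero_iff, hne]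
        rw [hc, Real.volume_univ, ENNReal.mul_top hnz] at hfin
        exact hfin rfl
      exact Filter.Eventually.of_forall (fun y => by rw [hconstw k y, hval])
    exact hzero hzh hzw
  -- main case: apply the grid Gagliardo-Nirenberg estimate
  have hA0' := hA0
  have hB0' := hB0
  have hAt := hAfin.ne
  have hBt := hBfin.ne
  simp only [gridLpPow] at hA0' hB0' hAt hBt
  have hmain := GridGN.main_bound u.h u.w u.hd u.wd hch hcw hlh hlw hfth hftw u.compat
    hp4 hp6 hA0' hAt hB0' hBt
  simpa only [gridLpPow] using hmain


end
end
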